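/- arXiv:1504.06862 — 8 statements merged into one kernel-verified Lean document; each statement's English description precedes it below -/
import Mathlib

section
/- Let X be a Banach space, W a bounded, closed, convex, symmetric subset of X, and for each n let ‖·‖_n be the equivalent norm on X whose unit ball is the closure of 2^n·W + 2^{-n}·B_X. Define |||x||| = (∑_{n=1}^∞ ‖x‖_n²)^{1/2}. If P : X → X is a projection with ‖P‖ ≤ 1, P(W) ⊆ W, and P(W) = P(B_X), then there is a constant c > 0 such that |||x||| = c‖x‖ for all x in the range of P. -/
open scoped Pointwise

/-- Davis–Figiel–Johnson–Pełczyński interpolation: if `P` is a norm-one projection with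
`P(W) ⊆ W` and `P(W) = P(B_X)`, then the interpolation norm is a multiple of the original
norm on the range of `P`. Here `N (n+1)` plays the role of the norm `‖·‖_{n+1}` whose unit
ball is the closure of `2^{n+1}·W + 2^{-(n+1)}·B_X`. -/
theorem stmt0
    {X : Type*} [NormedAddCommGroup X] [NormedSpace ℝ X] [CompleteSpace X]
    (W : Set X) (hWb : Bornology.IsBounded W) (hWcl : IsClosed W)
    (hWconv : Convex ℝ W) (hWsym : W = -W)
    (N : ℕ → X → ℝ)
    (hNball : ∀ n : ℕ, {x : X | N (n + 1) x ≤ 1}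
      = closure (((2 : ℝ) ^ (n + 1)) • W + Metric.closedBall (0 : X) (((2 : ℝ) ^ (n + 1))⁻¹)))
    (hNnorm : ∀ n : ℕ,
      (∀ x y : X, N (n + 1) (x + y) ≤ N (n + 1) x + N (n + 1) y)
      ∧ (∀ (a : ℝ) (x : X), N (n + 1) (a • x) = |a| * N (n + 1) x)
      ∧ (∀ x : X, 0 ≤ N (n + 1) x)
      ∧ (∀ x : X, N (n + 1) x = 0 → x = 0))
    (P : X →L[ℝ] X) (hPproj : ∀ x, P (P x) = P x) (hPnorm : ‖P‖ ≤ 1)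
    (hPW : P '' W ⊆ W) (hPWB : P '' W = P '' Metric.closedBall (0 : X) 1) :
    ∃ c : ℝ, 0 < c ∧ ∀ x ∈ Set.range P,
      Real.sqrt (∑' n : ℕ, (N (n + 1) x) ^ 2) = c * ‖x‖ := by
  set lam : ℕ → ℝ := fun n => 2 ^ (n + 1) + ((2 : ℝ) ^ (n + 1))⁻¹ with hlam
  have hlampos : ∀ n, 0 < lam n := fun n => by positivity
  have hfix : ∀ x ∈ Set.range P, P x = x := by
    rintro x ⟨y, rfl⟩; exact hPproj y
  have hPle : ∀ b : X, ‖P b‖ ≤ ‖b‖ := by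
    intro b
    calc ‖P b‖ ≤ ‖P‖ * ‖b‖ := P.le_opNorm b
      _ ≤ 1 * ‖b‖ := by gcongr
      _ = ‖b‖ := one_mul _
  have hPB : ∀ y ∈ P '' W, ‖y‖ ≤ 1 := by
    intro y hy
    rw [hPWB] at hy
    obtain ⟨b, hb, rfl⟩ := hy
    have hb1 : ‖b‖ ≤ 1 := by simpa using hb
    calc ‖P b‖ ≤ ‖b‖ := hPle b
      _ ≤ 1 := hb1
  -- forward core
  have core1 : ∀ n, ∀ y ∈ Set.range P, N (n+1) y ≤ 1 → ‖y‖ ≤ lam n := by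
    intro n y hy hN
    have hmem : y ∈ closure (((2 : ℝ) ^ (n + 1)) • W
        + Metric.closedBall (0 : X) (((2 : ℝ) ^ (n + 1))⁻¹)) := by
      rw [← hNball n]; exact hN
    have hsub : ((2 : ℝ) ^ (n + 1)) • W + Metric.closedBall (0 : X) (((2 : ℝ) ^ (n + 1))⁻¹)
        ⊆ P ⁻¹' (Metric.closedBall (0 : X) (lam n)) := by
      rintro z ⟨a, ha, b, hb, rfl⟩
      obtain ⟨w, hw, rfl⟩ := ha
      have hPw : ‖P w‖ ≤ 1 := hPB _ ⟨w, hw, rfl⟩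
      have hbn : ‖b‖ ≤ ((2 : ℝ) ^ (n + 1))⁻¹ := by simpa using hb
      have : ‖P (((2 : ℝ) ^ (n + 1)) • w + b)‖ ≤ lam n := by
        rw [map_add, map_smul]
        calc ‖((2 : ℝ) ^ (n + 1)) • P w + P b‖
            ≤ ‖((2 : ℝ) ^ (n + 1)) • P w‖ + ‖P b‖ := norm_add_le _ _
          _ = |(2 : ℝ) ^ (n + 1)| * ‖P w‖ + ‖P b‖ := by rw [norm_smul, Real.norm_eq_abs]
          _ ≤ (2 : ℝ) ^ (n + 1) * 1 + ((2 : ℝ) ^ (n + 1))⁻¹ := by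
              rw [abs_of_pos (by positivity)]
              gcongr
              exact le_trans (hPle b) hbn
          _ = lam n := by rw [mul_one]
      simpa [Metric.mem_closedBall, dist_zero_right] using this
    have hcl : IsClosed (P ⁻¹' (Metric.closedBall (0 : X) (lam n))) :=
      Metric.isClosed_closedBall.preimage P.continuous
    have : y ∈ P ⁻¹' (Metric.closedBall (0 : X) (lam n)) :=
      (hcl.closure_subset_iff.mpr hsub) hmem
    rw [Set.mem_preimage, Metric.mem_closedBall, dist_zero_right, hfix y hy] at this
    exact this
  -- backward core
  have core2 : ∀ n, ∀ y ∈ Set.range P, ‖y‖ ≤ lam n → N (n+1) y ≤ 1 := by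
    intro n y hy hny
    set z : X := (lam n)⁻¹ • y with hz
    have hzr : z ∈ Set.range P := by
      obtain ⟨v, rfl⟩ := hy
      exact ⟨(lam n)⁻¹ • v, by rw [map_smul]⟩
    have hzn : ‖z‖ ≤ 1 := by
      rw [hz, norm_smul, Real.norm_eq_abs, abs_of_pos (by positivity)]
      rw [inv_mul_le_iff₀ (hlampos n), mul_one]
      exact hny
    have hzW : z ∈ P '' W := by
      rw [hPWB]
      exact ⟨z, by simpa using hzn, hfix z hzr⟩
    obtain ⟨w, hw, hwz⟩ := hzW
    have hyz : y = ((2 : ℝ) ^ (n + 1)) • P w + ((2 : ℝ) ^ (n + 1))⁻¹ • P w := by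
      rw [hwz, ← add_smul]
      rw [hz]
      rw [smul_smul]
      rw [mul_inv_cancel₀ (ne_of_gt (hlampos n)), one_smul]
    have hmem : y ∈ ((2 : ℝ) ^ (n + 1)) • W
        + Metric.closedBall (0 : X) (((2 : ℝ) ^ (n + 1))⁻¹) := by
      rw [hyz]
      refine ⟨((2 : ℝ) ^ (n + 1)) • P w, ⟨P w, hPW ⟨w, hw, rfl⟩, rfl⟩,
        ((2 : ℝ) ^ (n + 1))⁻¹ • P w, ?_, rfl⟩
      have : ‖P w‖ ≤ 1 := hPB _ ⟨w, hw, rfl⟩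
      simp only [Metric.mem_closedBall, dist_zero_right, norm_smul, Real.norm_eq_abs,
        abs_of_pos (show (0:ℝ) < ((2 : ℝ) ^ (n + 1))⁻¹ by positivity)]
      calc ((2 : ℝ) ^ (n + 1))⁻¹ * ‖P w‖ ≤ ((2 : ℝ) ^ (n + 1))⁻¹ * 1 := by gcongr
        _ = _ := mul_one _
    have : y ∈ {x : X | N (n + 1) x ≤ 1} := by
      rw [hNball n]; exact subset_closure hmem
    exact this
  -- exact value
  have key : ∀ n, ∀ y ∈ Set.range P, N (n+1) y = (lam n)⁻¹ * ‖y‖ := by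
    intro n y hy
    have hiff : ∀ t : ℝ, 0 < t → (N (n+1) y ≤ t ↔ (lam n)⁻¹ * ‖y‖ ≤ t) := by
      intro t ht
      have hsr : t⁻¹ • y ∈ Set.range P := by
        obtain ⟨v, rfl⟩ := hy
        exact ⟨t⁻¹ • v, by rw [map_smul]⟩
      have hhom : N (n+1) (t⁻¹ • y) = t⁻¹ * N (n+1) y := by
        rw [(hNnorm n).2.1, abs_of_pos (by positivity)]
      constructor
      · intro h
        have h1 : N (n+1) (t⁻¹ • y) ≤ 1 := by
          rw [hhom, inv_mul_le_iff₀ ht, mul_one]; exact h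
        have h2 := core1 n _ hsr h1
        rw [norm_smul, Real.norm_eq_abs, abs_of_pos (by positivity)] at h2
        have h3 : ‖y‖ ≤ t * lam n := (inv_mul_le_iff₀ ht).mp h2
        rw [inv_mul_le_iff₀ (hlampos n)]
        calc ‖y‖ ≤ t * lam n := h3
          _ = lam n * t := mul_comm _ _
      · intro h
        have h3 : ‖y‖ ≤ lam n * t := (inv_mul_le_iff₀ (hlampos n)).mp h
        have h2 : ‖t⁻¹ • y‖ ≤ lam n := by
          rw [norm_smul, Real.norm_eq_abs, abs_of_pos (by positivity),
            inv_mul_le_iff₀ ht]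
          calc ‖y‖ ≤ lam n * t := h3
            _ = t * lam n := mul_comm _ _
        have := core2 n _ hsr h2
        rw [hhom, inv_mul_le_iff₀ ht, mul_one] at this
        exact this
    have hN0 : 0 ≤ N (n+1) y := (hNnorm n).2.2.1 y
    have hb0 : 0 ≤ (lam n)⁻¹ * ‖y‖ := by positivity
    by_cases hy0 : y = 0
    · subst hy0
      have : N (n+1) ((0:ℝ) • (0:X)) = 0 := by
        rw [(hNnorm n).2.1]; simp
      simpa using this
    · have hbp : 0 < (lam n)⁻¹ * ‖y‖ := by
        have : 0 < ‖y‖ := norm_pos_iff.mpr hy0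
        positivity
      refine le_antisymm ?_ ?_
      · exact (hiff _ hbp).mpr le_rfl
      · refine le_of_forall_pos_le_add ?_
        intro ε hε
        exact (hiff (N (n+1) y + ε) (by positivity)).mp (by linarith)
  -- summability
  have hsum : Summable (fun n => ((lam n)⁻¹) ^ 2) := by
    have hgeo : Summable (fun n : ℕ => ((1:ℝ)/4) ^ n) :=
      summable_geometric_of_lt_one (by norm_num) (by norm_num)
    refine Summable.of_nonneg_of_le (fun n => by positivity) (fun n => ?_) hgeo
    have h1 : (lam n)⁻¹ ≤ ((2 : ℝ) ^ (n+1))⁻¹ := by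
      apply inv_anti₀ (by positivity)
      rw [hlam]
      have : (0:ℝ) < ((2 : ℝ) ^ (n + 1))⁻¹ := by positivity
      linarith
    calc ((lam n)⁻¹) ^ 2 ≤ (((2 : ℝ) ^ (n+1))⁻¹) ^ 2 := by
          gcongr
      _ = ((1:ℝ)/4) ^ (n+1) := by
          rw [← inv_pow, show ((1:ℝ)/4) = ((2:ℝ)⁻¹) ^ 2 by norm_num, ← pow_mul, ← pow_mul,
            mul_comm]
      _ ≤ ((1:ℝ)/4) ^ n := by
          apply pow_le_pow_of_le_one (by norm_num) (by norm_num)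
          omega
  set s : ℝ := ∑' n : ℕ, ((lam n)⁻¹) ^ 2 with hs
  have hspos : 0 < s := Summable.tsum_pos hsum (fun n => by positivity) 0 (by positivity)
  refine ⟨Real.sqrt s, Real.sqrt_pos.mpr hspos, ?_⟩
  intro x hx
  have heq : ∀ n : ℕ, (N (n+1) x) ^ 2 = ((lam n)⁻¹) ^ 2 * ‖x‖ ^ 2 := by
    intro n
    rw [key n x hx, mul_pow]
  rw [tsum_congr heq, tsum_mul_right, mul_comm]
  rw [Real.sqrt_mul (sq_nonneg ‖x‖), Real.sqrt_sq (norm_nonneg x), mul_comm]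
end

section
/- With the notation of the Davis–Figiel–Johnson–Pełczyński interpolation: if x ∈ PX with ‖x‖ = 1, where P is a norm-one projection satisfying P(W) ⊆ W and P(W) = P(B_X), then for every n, ‖x‖_n = 1/(2^n + 2^{-n}). -/
open scoped Pointwise

open Metric

/-!
A unit vector `x = P x` lies in `W` (because `P(B_X) = P(W) ⊆ W`), so
`(2^n + 2^{-n}) • x ∈ 2^n • W + 2^{-n} • B_X`, giving `‖x‖_n ≤ 1/(2^n + 2^{-n})`. Conversely `P`
maps `W` into `B_X` and has norm at most one, so it maps the closure of `2^n • W + 2^{-n} • B_X`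
into the ball of radius `2^n + 2^{-n}`; applied to `x / ‖x‖_n` this gives the reverse inequality.
-/

lemma eq_inv_of_isGreatest_smul_le_one {X : Type*} [AddCommGroup X] [Module ℝ X]
    {f : X → ℝ} (hf : ∀ (a : ℝ) (x : X), f (a • x) = |a| * f x) {x : X} (hx : 0 < f x)
    {s : ℝ} (hs : IsGreatest {t : ℝ | 0 < t ∧ f (t • x) ≤ 1} s) : f x = s⁻¹ := by
  obtain ⟨⟨hs_pos, hs_le⟩, hs_max⟩ := hs
  rw [hf, abs_of_pos hs_pos] at hs_le
  have hinv_le : (f x)⁻¹ ≤ s :=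
    hs_max ⟨inv_pos.mpr hx, by rw [hf, abs_of_pos (inv_pos.mpr hx), inv_mul_cancel₀ hx.ne']⟩
  apply le_antisymm
  · rwa [← one_div, le_div_iff₀ hs_pos, mul_comm]
  · rwa [inv_le_comm₀ hs_pos hx]

lemma add_smul_mem_smul_add_closedBall {X : Type*} [NormedAddCommGroup X] [NormedSpace ℝ X]
    {W : Set X} {x : X} (hxW : x ∈ W) (hx : ‖x‖ ≤ 1) (a : ℝ) {r : ℝ} (hr : 0 ≤ r) :
    (a + r) • x ∈ a • W + closedBall (0 : X) r := by
  rw [add_smul]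
  refine Set.add_mem_add (Set.smul_mem_smul_set hxW) ?_
  rw [mem_closedBall_zero_iff, norm_smul, Real.norm_of_nonneg hr]
  exact mul_le_of_le_one_right hr hx

namespace ContinuousLinearMap

variable {X : Type*} [NormedAddCommGroup X] [NormedSpace ℝ X] {W : Set X} {P : X →L[ℝ] X}

lemma mem_of_image_closedBall_eq_image (hPW : P '' W ⊆ W)
    (hPWB : P '' W = P '' closedBall (0 : X) 1) {x : X} (hPx : P x = x) (hx : ‖x‖ ≤ 1) :
    x ∈ W := by
  apply hPW
  rw [hPWB]
  exact ⟨x, mem_closedBall_zero_iff.mpr hx, hPx⟩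

lemma norm_apply_le_one_of_image_eq_image_closedBall (hPnorm : ‖P‖ ≤ 1)
    (hPWB : P '' W = P '' closedBall (0 : X) 1) {w : X} (hw : w ∈ W) : ‖P w‖ ≤ 1 := by
  obtain ⟨b, hb, hPb⟩ : P w ∈ P '' closedBall (0 : X) 1 := hPWB ▸ ⟨w, hw, rfl⟩
  rw [← hPb]
  exact P.le_of_opNorm_le_of_le hPnorm (mem_closedBall_zero_iff.mp hb) |>.trans_eq (one_mul 1)

lemma norm_apply_le_of_mem_closure_smul_add_closedBall (hPnorm : ‖P‖ ≤ 1)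
    (hPW : ∀ w ∈ W, ‖P w‖ ≤ 1) {a r : ℝ} (ha : 0 ≤ a) {z : X}
    (hz : z ∈ closure (a • W + closedBall (0 : X) r)) : ‖P z‖ ≤ a + r := by
  have hsub : a • W + closedBall (0 : X) r ⊆ P ⁻¹' closedBall 0 (a + r) := by
    rintro _ ⟨_, ⟨w, hw, rfl⟩, b, hb, rfl⟩
    rw [Set.mem_preimage, mem_closedBall_zero_iff, map_add, map_smul]
    calc ‖a • P w + P b‖ ≤ a * ‖P w‖ + ‖P b‖ := by
          grw [norm_add_le, norm_smul, Real.norm_of_nonneg ha]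
      _ ≤ a * 1 + 1 * r := by
          gcongr
          · exact hPW w hw
          · exact P.le_of_opNorm_le_of_le hPnorm (mem_closedBall_zero_iff.mp hb)
      _ = a + r := by ring
  have hclosed : IsClosed (P ⁻¹' closedBall (0 : X) (a + r)) :=
    isClosed_closedBall.preimage P.continuous
  exact mem_closedBall_zero_iff.mp (closure_minimal hsub hclosed hz)

end ContinuousLinearMap

theorem stmt1_general
    {X : Type*} [NormedAddCommGroup X] [NormedSpace ℝ X]
    (W : Set X)
    (N : ℕ → X → ℝ)
    (hNball : ∀ n : ℕ, {x : X | N (n + 1) x ≤ 1}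
      = closure (((2 : ℝ) ^ (n + 1)) • W + Metric.closedBall (0 : X) (((2 : ℝ) ^ (n + 1))⁻¹)))
    (hNnorm : ∀ n : ℕ,
      (∀ x y : X, N (n + 1) (x + y) ≤ N (n + 1) x + N (n + 1) y)
      ∧ (∀ (a : ℝ) (x : X), N (n + 1) (a • x) = |a| * N (n + 1) x)
      ∧ (∀ x : X, 0 ≤ N (n + 1) x)
      ∧ (∀ x : X, N (n + 1) x = 0 → x = 0))
    (P : X →L[ℝ] X) (hPproj : ∀ x, P (P x) = P x) (hPnorm : ‖P‖ ≤ 1)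
    (hPW : P '' W ⊆ W) (hPWB : P '' W = P '' Metric.closedBall (0 : X) 1) :
    ∀ x ∈ Set.range P, ‖x‖ = 1 → ∀ n : ℕ,
      N (n + 1) x = ((2 : ℝ) ^ (n + 1) + ((2 : ℝ) ^ (n + 1))⁻¹)⁻¹ := by
  rintro x ⟨y, rfl⟩ hx n
  obtain ⟨-, hhom, hnonneg, hdef⟩ := hNnorm n
  set c : ℝ := (2 : ℝ) ^ (n + 1)
  have hc : 0 < c := by positivity
  have hxW : P y ∈ W := P.mem_of_image_closedBall_eq_image hPW hPWB (hPproj y) hx.le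
  have hNpos : 0 < N (n + 1) (P y) :=
    (hnonneg _).lt_of_ne fun h => by simp [hdef _ h.symm] at hx
  refine eq_inv_of_isGreatest_smul_le_one hhom hNpos ⟨⟨by positivity, ?_⟩, ?_⟩
  · show (c + c⁻¹) • P y ∈ {z : X | N (n + 1) z ≤ 1}
    rw [hNball n]
    exact subset_closure (add_smul_mem_smul_add_closedBall hxW hx.le c (inv_pos.mpr hc).le)
  · rintro t ⟨ht, htx⟩
    have hmem : t • P y ∈ {z : X | N (n + 1) z ≤ 1} := htx
    rw [hNball n] at hmem
    have := P.norm_apply_le_of_mem_closure_smul_add_closedBall hPnorm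
      (fun w hw => P.norm_apply_le_one_of_image_eq_image_closedBall hPnorm hPWB hw) hc.le hmem
    rwa [map_smul, hPproj, norm_smul, hx, mul_one, Real.norm_of_nonneg ht.le] at this

/-- In the DFJP interpolation scheme, if `x ∈ PX` has `‖x‖ = 1`, where `P` is a norm-one
projection with `P(W) ⊆ W` and `P(W) = P(B_X)`, then `‖x‖_n = 1/(2^n + 2^{-n})` for every
`n ≥ 1` (here `N (n+1)` is the norm whose unit ball is the closure of
`2^{n+1}·W + 2^{-(n+1)}·B_X`). -/
theorem stmt1
    {X : Type*} [NormedAddCommGroup X] [NormedSpace ℝ X] [CompleteSpace X]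
    (W : Set X) (hWb : Bornology.IsBounded W) (hWcl : IsClosed W)
    (hWconv : Convex ℝ W) (hWsym : W = -W)
    (N : ℕ → X → ℝ)
    (hNball : ∀ n : ℕ, {x : X | N (n + 1) x ≤ 1}
      = closure (((2 : ℝ) ^ (n + 1)) • W + Metric.closedBall (0 : X) (((2 : ℝ) ^ (n + 1))⁻¹)))
    (hNnorm : ∀ n : ℕ,
      (∀ x y : X, N (n + 1) (x + y) ≤ N (n + 1) x + N (n + 1) y)
      ∧ (∀ (a : ℝ) (x : X), N (n + 1) (a • x) = |a| * N (n + 1) x)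
      ∧ (∀ x : X, 0 ≤ N (n + 1) x)
      ∧ (∀ x : X, N (n + 1) x = 0 → x = 0))
    (P : X →L[ℝ] X) (hPproj : ∀ x, P (P x) = P x) (hPnorm : ‖P‖ ≤ 1)
    (hPW : P '' W ⊆ W) (hPWB : P '' W = P '' Metric.closedBall (0 : X) 1) :
    ∀ x ∈ Set.range P, ‖x‖ = 1 → ∀ n : ℕ,
      N (n + 1) x = ((2 : ℝ) ^ (n + 1) + ((2 : ℝ) ^ (n + 1))⁻¹)⁻¹ :=
  stmt1_general W N hNball hNnorm P hPproj hPnorm hPW hPWB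
end

section
/- There exists a norm ϱ on ℝ³ satisfying: (i) (|r|+|s|)/2 ≤ ϱ(r,s,t) ≤ max{|r|,|s|,|t|} for all (r,s,t); (ii) ϱ is monotone on the positive octant: ϱ(r',s',t') ≥ ϱ(r,s,t) whenever 0 ≤ r ≤ r', 0 ≤ s ≤ s', 0 ≤ t ≤ t'; (iii) ϱ(r,s,t') > ϱ(r,s,t) whenever 0 < r < s and 0 < t < t'; (iv) ϱ(r',s,t) ≥ ϱ(r,s,t) + (r'−r)/4 whenever r,s,t > 0 and 0 < r < r'. -/
/-- The linear functional `ℓ_θ` (on absolute values, symmetrized in `r,s`). -/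
noncomputable def ellF (θ r s t : ℝ) : ℝ :=
  max ((1/2 - θ) * |r| + (1/2 + θ - θ^2) * |s|)
      ((1/2 - θ) * |s| + (1/2 + θ - θ^2) * |r|) + θ^2 * |t|

/-- The norm, in closed form: `sup_{θ ∈ [0,1/4]} ℓ_θ`. -/
noncomputable def rhoF (r s t : ℝ) : ℝ :=
  if max |r| |s| - |t| ≤ 2 * (max |r| |s| - min |r| |s|) then
    (min |r| |s| + max |r| |s|) / 2 + (max |r| |s| - min |r| |s|) / 4
      - (max |r| |s| - |t|) / 16
  else
    (min |r| |s| + max |r| |s|) / 2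
      + (max |r| |s| - min |r| |s|)^2 / (4 * (max |r| |s| - |t|))

lemma ell_sorted {θ : ℝ} (h0 : 0 ≤ θ) (h1 : θ ≤ 1/4) (r s t : ℝ) :
    ellF θ r s t
      = (1/2 - θ) * min |r| |s| + (1/2 + θ - θ^2) * max |r| |s| + θ^2 * |t| := by
  unfold ellF
  rcases le_total |r| |s| with h | h
  · have hle : (1/2 - θ) * |s| + (1/2 + θ - θ^2) * |r|
        ≤ (1/2 - θ) * |r| + (1/2 + θ - θ^2) * |s| := by
      nlinarith [mul_nonneg (mul_nonneg h0 (sub_nonneg.2 h)) (by linarith : (0:ℝ) ≤ 2 - θ)]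
    rw [min_eq_left h, max_eq_left hle, max_eq_right h]
  · have hle : (1/2 - θ) * |r| + (1/2 + θ - θ^2) * |s|
        ≤ (1/2 - θ) * |s| + (1/2 + θ - θ^2) * |r| := by
      nlinarith [mul_nonneg (mul_nonneg h0 (sub_nonneg.2 h)) (by linarith : (0:ℝ) ≤ 2 - θ)]
    rw [min_eq_right h, max_eq_right hle, max_eq_left h]

/-- Every `ℓ_θ` is below `ϱ`. -/
lemma ell_le_rho {θ : ℝ} (h0 : 0 ≤ θ) (h1 : θ ≤ 1/4) (r s t : ℝ) :
    ellF θ r s t ≤ rhoF r s t := by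
  rw [ell_sorted h0 h1]
  set m := min |r| |s| with hm
  set M := max |r| |s| with hM
  have hmM : m ≤ M := min_le_max
  have hm0 : 0 ≤ m := le_min (abs_nonneg r) (abs_nonneg s)
  have ht0 : 0 ≤ |t| := abs_nonneg t
  unfold rhoF
  rw [← hm, ← hM]
  split_ifs with h
  · nlinarith [mul_nonneg (mul_nonneg (by linarith : (0:ℝ) ≤ 1/4 - θ)
      (by linarith : (0:ℝ) ≤ 2*(M - m) - (M - |t|))) (by linarith : (0:ℝ) ≤ 1/4 + θ),
      mul_nonneg (mul_nonneg (by linarith : (0:ℝ) ≤ 1/4 - θ)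
        (by linarith : (0:ℝ) ≤ 1/4 - θ)) (by linarith : (0:ℝ) ≤ M - m)]
  · push_neg at h
    have he : 0 < M - |t| := by nlinarith
    have key : θ * (M - m) - θ^2 * (M - |t|) ≤ (M - m)^2 / (4 * (M - |t|)) := by
      rw [le_div_iff₀ (by linarith : (0:ℝ) < 4 * (M - |t|))]
      nlinarith [sq_nonneg (M - m - 2*θ*(M - |t|))]
    nlinarith

/-- `ϱ` is attained by some `ℓ_θ`. -/
lemma exists_ell_eq_rho (r s t : ℝ) :
    ∃ θ : ℝ, 0 ≤ θ ∧ θ ≤ 1/4 ∧ rhoF r s t = ellF θ r s t := by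
  set m := min |r| |s| with hm
  set M := max |r| |s| with hM
  have hmM : m ≤ M := min_le_max
  by_cases h : M - |t| ≤ 2 * (M - m)
  · refine ⟨1/4, by norm_num, le_refl _, ?_⟩
    rw [ell_sorted (by norm_num) (le_refl _), ← hm, ← hM]
    unfold rhoF
    rw [← hm, ← hM, if_pos h]
    ring
  · push_neg at h
    have he : 0 < M - |t| := by nlinarith
    have hd0 : 0 ≤ (M - m) / (2 * (M - |t|)) :=
      div_nonneg (by linarith) (by linarith)
    have hd1 : (M - m) / (2 * (M - |t|)) ≤ 1/4 := by
      rw [div_le_iff₀ (by linarith)]; nlinarith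
    refine ⟨(M - m) / (2 * (M - |t|)), hd0, hd1, ?_⟩
    rw [ell_sorted hd0 hd1, ← hm, ← hM]
    unfold rhoF
    rw [← hm, ← hM, if_neg (by linarith)]
    field_simp
    ring

lemma ell_smul {θ : ℝ} (a r s t : ℝ) :
    ellF θ (a*r) (a*s) (a*t) = |a| * ellF θ r s t := by
  unfold ellF
  rw [abs_mul, abs_mul, abs_mul, mul_add,
    mul_max_of_nonneg _ _ (abs_nonneg a)]
  ring_nf

lemma rho_smul (a r s t : ℝ) :
    rhoF (a*r) (a*s) (a*t) = |a| * rhoF r s t := by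
  have ha : 0 ≤ |a| := abs_nonneg a
  apply le_antisymm
  · obtain ⟨θ, h0, h1, heq⟩ := exists_ell_eq_rho (a*r) (a*s) (a*t)
    rw [heq, ell_smul]
    exact mul_le_mul_of_nonneg_left (ell_le_rho h0 h1 r s t) ha
  · obtain ⟨θ, h0, h1, heq⟩ := exists_ell_eq_rho r s t
    rw [heq, ← ell_smul]
    exact ell_le_rho h0 h1 _ _ _

lemma ell_add {θ : ℝ} (h0 : 0 ≤ θ) (h1 : θ ≤ 1/4)
    (r₁ s₁ t₁ r₂ s₂ t₂ : ℝ) :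
    ellF θ (r₁+r₂) (s₁+s₂) (t₁+t₂) ≤ ellF θ r₁ s₁ t₁ + ellF θ r₂ s₂ t₂ := by
  have ca : (0:ℝ) ≤ 1/2 - θ := by linarith
  have cb : (0:ℝ) ≤ 1/2 + θ - θ^2 := by nlinarith
  have ct : (0:ℝ) ≤ θ^2 := sq_nonneg θ
  unfold ellF
  have har := abs_add_le r₁ r₂
  have has := abs_add_le s₁ s₂
  have hat := abs_add_le t₁ t₂
  have h1' : (1/2 - θ) * |r₁+r₂| + (1/2 + θ - θ^2) * |s₁+s₂|
      ≤ ((1/2 - θ) * |r₁| + (1/2 + θ - θ^2) * |s₁|)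
        + ((1/2 - θ) * |r₂| + (1/2 + θ - θ^2) * |s₂|) := by nlinarith
  have h2' : (1/2 - θ) * |s₁+s₂| + (1/2 + θ - θ^2) * |r₁+r₂|
      ≤ ((1/2 - θ) * |s₁| + (1/2 + θ - θ^2) * |r₁|)
        + ((1/2 - θ) * |s₂| + (1/2 + θ - θ^2) * |r₂|) := by nlinarith
  have hmax : max ((1/2 - θ) * |r₁+r₂| + (1/2 + θ - θ^2) * |s₁+s₂|)
      ((1/2 - θ) * |s₁+s₂| + (1/2 + θ - θ^2) * |r₁+r₂|)
      ≤ max ((1/2 - θ) * |r₁| + (1/2 + θ - θ^2) * |s₁|)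
          ((1/2 - θ) * |s₁| + (1/2 + θ - θ^2) * |r₁|)
        + max ((1/2 - θ) * |r₂| + (1/2 + θ - θ^2) * |s₂|)
          ((1/2 - θ) * |s₂| + (1/2 + θ - θ^2) * |r₂|) := by
    apply max_le
    · exact le_trans h1' (add_le_add (le_max_left _ _) (le_max_left _ _))
    · exact le_trans h2' (add_le_add (le_max_right _ _) (le_max_right _ _))
  nlinarith [mul_le_mul_of_nonneg_left hat ct]

lemma rho_lower (r s t : ℝ) : (|r| + |s|) / 2 ≤ rhoF r s t := by
  have h := ell_le_rho (θ := 0) (by norm_num) (by norm_num) r s t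
  rw [ell_sorted (by norm_num) (by norm_num)] at h
  have : min |r| |s| + max |r| |s| = |r| + |s| := min_add_max _ _
  nlinarith

lemma rho_upper (r s t : ℝ) : rhoF r s t ≤ max (max |r| |s|) |t| := by
  obtain ⟨θ, h0, h1, heq⟩ := exists_ell_eq_rho r s t
  rw [heq, ell_sorted h0 h1]
  have hm : min |r| |s| ≤ max (max |r| |s|) |t| :=
    le_trans (le_trans min_le_max (le_max_left _ _)) (le_refl _)
  have hM : max |r| |s| ≤ max (max |r| |s|) |t| := le_max_left _ _
  have ht : |t| ≤ max (max |r| |s|) |t| := le_max_right _ _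
  have ca : (0:ℝ) ≤ 1/2 - θ := by linarith
  have cb : (0:ℝ) ≤ 1/2 + θ - θ^2 := by nlinarith
  have ct : (0:ℝ) ≤ θ^2 := sq_nonneg θ
  nlinarith [mul_le_mul_of_nonneg_left hm ca, mul_le_mul_of_nonneg_left hM cb,
    mul_le_mul_of_nonneg_left ht ct]

lemma ell_mono {θ : ℝ} (h0 : 0 ≤ θ) (h1 : θ ≤ 1/4)
    {r r' s s' t t' : ℝ} (hr : 0 ≤ r) (hr' : r ≤ r') (hs : 0 ≤ s) (hs' : s ≤ s')
    (ht : 0 ≤ t) (ht' : t ≤ t') :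
    ellF θ r s t ≤ ellF θ r' s' t' := by
  have ca : (0:ℝ) ≤ 1/2 - θ := by linarith
  have cb : (0:ℝ) ≤ 1/2 + θ - θ^2 := by nlinarith
  have ct : (0:ℝ) ≤ θ^2 := sq_nonneg θ
  unfold ellF
  rw [abs_of_nonneg hr, abs_of_nonneg hs, abs_of_nonneg ht,
    abs_of_nonneg (le_trans hr hr'), abs_of_nonneg (le_trans hs hs'),
    abs_of_nonneg (le_trans ht ht')]
  have h1' : (1/2 - θ) * r + (1/2 + θ - θ^2) * s
      ≤ (1/2 - θ) * r' + (1/2 + θ - θ^2) * s' := by nlinarith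
  have h2' : (1/2 - θ) * s + (1/2 + θ - θ^2) * r
      ≤ (1/2 - θ) * s' + (1/2 + θ - θ^2) * r' := by nlinarith
  have hmax : max ((1/2 - θ) * r + (1/2 + θ - θ^2) * s)
        ((1/2 - θ) * s + (1/2 + θ - θ^2) * r)
      ≤ max ((1/2 - θ) * r' + (1/2 + θ - θ^2) * s')
        ((1/2 - θ) * s' + (1/2 + θ - θ^2) * r') :=
    max_le (le_trans h1' (le_max_left _ _)) (le_trans h2' (le_max_right _ _))
  nlinarith [mul_le_mul_of_nonneg_left ht' ct]

/-- There exists a norm `ϱ` on `ℝ³` such that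
(i) `(|r|+|s|)/2 ≤ ϱ(r,s,t) ≤ max {|r|,|s|,|t|}`;
(ii) `ϱ` is monotone on the positive octant;
(iii) `ϱ(r,s,t') > ϱ(r,s,t)` whenever `0 < r < s` and `0 < t < t'`;
(iv) `ϱ(r',s,t) ≥ ϱ(r,s,t) + (r'−r)/4` for `r,s,t > 0` and `r < r'`. -/
theorem stmt4 :
    ∃ ϱ : ℝ × ℝ × ℝ → ℝ,
      (∀ v : ℝ × ℝ × ℝ, 0 ≤ ϱ v)
      ∧ (∀ v : ℝ × ℝ × ℝ, ϱ v = 0 → v = 0)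
      ∧ (∀ (a : ℝ) (v : ℝ × ℝ × ℝ), ϱ (a • v) = |a| * ϱ v)
      ∧ (∀ v w : ℝ × ℝ × ℝ, ϱ (v + w) ≤ ϱ v + ϱ w)
      ∧ (∀ r s t : ℝ, (|r| + |s|) / 2 ≤ ϱ (r, s, t)
          ∧ ϱ (r, s, t) ≤ max (max |r| |s|) |t|)
      ∧ (∀ r r' s s' t t' : ℝ, 0 ≤ r → r ≤ r' → 0 ≤ s → s ≤ s' → 0 ≤ t → t ≤ t' →
          ϱ (r, s, t) ≤ ϱ (r', s', t'))
      ∧ (∀ r s t t' : ℝ, 0 < r → r < s → 0 < t → t < t' →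
          ϱ (r, s, t) < ϱ (r, s, t'))
      ∧ (∀ r r' s t : ℝ, 0 < r → r < r' → 0 < s → 0 < t →
          ϱ (r, s, t) + (r' - r) / 4 ≤ ϱ (r', s, t)) := by
  refine ⟨fun v => rhoF v.1 v.2.1 v.2.2, ?_, ?_, ?_, ?_, ?_, ?_, ?_, ?_⟩
  · intro v
    have := rho_lower v.1 v.2.1 v.2.2
    have := abs_nonneg v.1
    have := abs_nonneg v.2.1
    linarith
  · intro v hv
    have hv : rhoF v.1 v.2.1 v.2.2 = 0 := hv
    have h0 := rho_lower v.1 v.2.1 v.2.2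
    rw [hv] at h0
    have hr : v.1 = 0 := abs_eq_zero.mp (le_antisymm (by nlinarith [abs_nonneg v.2.1]) (abs_nonneg v.1))
    have hs : v.2.1 = 0 := abs_eq_zero.mp (le_antisymm (by nlinarith [abs_nonneg v.1]) (abs_nonneg v.2.1))
    have h4 := ell_le_rho (θ := 1/4) (by norm_num) (le_refl _) v.1 v.2.1 v.2.2
    rw [hv, ell_sorted (by norm_num) (le_refl _), hr, hs] at h4
    simp at h4
    have ht : v.2.2 = 0 := abs_eq_zero.mp (le_antisymm (by nlinarith [abs_nonneg v.2.2]) (abs_nonneg v.2.2))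
    exact Prod.ext hr (Prod.ext hs ht)
  · intro a v
    have : a • v = (a * v.1, a * v.2.1, a * v.2.2) := rfl
    rw [this]
    exact rho_smul a v.1 v.2.1 v.2.2
  · intro v w
    obtain ⟨θ, h0, h1, heq⟩ := exists_ell_eq_rho (v+w).1 (v+w).2.1 (v+w).2.2
    have hvw : (v+w).1 = v.1 + w.1 ∧ (v+w).2.1 = v.2.1 + w.2.1 ∧ (v+w).2.2 = v.2.2 + w.2.2 :=
      ⟨rfl, rfl, rfl⟩
    calc rhoF (v+w).1 (v+w).2.1 (v+w).2.2 = ellF θ (v+w).1 (v+w).2.1 (v+w).2.2 := heq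
      _ = ellF θ (v.1+w.1) (v.2.1+w.2.1) (v.2.2+w.2.2) := by rw [hvw.1, hvw.2.1, hvw.2.2]
      _ ≤ ellF θ v.1 v.2.1 v.2.2 + ellF θ w.1 w.2.1 w.2.2 := ell_add h0 h1 _ _ _ _ _ _
      _ ≤ rhoF v.1 v.2.1 v.2.2 + rhoF w.1 w.2.1 w.2.2 :=
          add_le_add (ell_le_rho h0 h1 _ _ _) (ell_le_rho h0 h1 _ _ _)
  · intro r s t
    exact ⟨rho_lower r s t, rho_upper r s t⟩
  · intro r r' s s' t t' hr hr' hs hs' ht ht'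
    show rhoF r s t ≤ rhoF r' s' t'
    obtain ⟨θ, h0, h1, heq⟩ := exists_ell_eq_rho r s t
    rw [heq]
    exact le_trans (ell_mono h0 h1 hr hr' hs hs' ht ht') (ell_le_rho h0 h1 _ _ _)
  · -- strict monotonicity in t when 0 < r < s
    intro r s t t' hr hrs ht htt'
    show rhoF r s t < rhoF r s t'
    obtain ⟨θ, h0, h1, heq⟩ := exists_ell_eq_rho r s t
    rcases eq_or_lt_of_le h0 with h00 | h0pos
    · -- θ = 0 : ϱ(r,s,t) = (r+s)/2, find a better θ for t'
      have hv : rhoF r s t = (r + s) / 2 := by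
        rw [heq, ell_sorted h0 h1, ← h00]
        have hmin : min |r| |s| = r := by
          rw [abs_of_pos hr, abs_of_pos (lt_trans hr hrs)]
          exact min_eq_left (le_of_lt hrs)
        have hmax : max |r| |s| = s := by
          rw [abs_of_pos hr, abs_of_pos (lt_trans hr hrs)]
          exact max_eq_right (le_of_lt hrs)
        rw [hmin, hmax]; ring
      set θ' := min (1/4) ((s - r) / (2 * (s + t'))) with hθ'
      have ht'pos : 0 < t' := lt_trans ht htt'
      have hst' : 0 < s + t' := by linarith [lt_trans hr hrs]
      have hθ'pos : 0 < θ' := lt_min (by norm_num) (div_pos (by linarith) (by linarith))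
      have hθ'le : θ' ≤ 1/4 := min_le_left _ _
      have hθ'le2 : θ' ≤ (s - r) / (2 * (s + t')) := min_le_right _ _
      have key : (r + s) / 2 < ellF θ' r s t' := by
        rw [ell_sorted (le_of_lt hθ'pos) hθ'le]
        have hmin : min |r| |s| = r := by
          rw [abs_of_pos hr, abs_of_pos (lt_trans hr hrs)]
          exact min_eq_left (le_of_lt hrs)
        have hmax : max |r| |s| = s := by
          rw [abs_of_pos hr, abs_of_pos (lt_trans hr hrs)]
          exact max_eq_right (le_of_lt hrs)
        rw [hmin, hmax, abs_of_pos ht'pos]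
        have hθ'lt : θ' * (2 * (s + t')) ≤ s - r :=
          (le_div_iff₀ (by linarith : (0:ℝ) < 2 * (s + t'))).1 hθ'le2
        nlinarith [mul_pos hθ'pos (sub_pos.2 hrs),
          mul_le_mul_of_nonneg_left hθ'lt (le_of_lt hθ'pos),
          mul_pos (mul_pos hθ'pos hθ'pos) ht'pos]
      calc rhoF r s t = (r + s) / 2 := hv
        _ < ellF θ' r s t' := key
        _ ≤ rhoF r s t' := ell_le_rho (le_of_lt hθ'pos) hθ'le _ _ _
    · -- θ > 0 : ℓ_θ strictly increases in t
      have key : ellF θ r s t + θ^2 * (t' - t) = ellF θ r s t' := by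
        unfold ellF
        rw [abs_of_pos ht, abs_of_pos (lt_trans ht htt')]
        ring
      have hsq : 0 < θ^2 * (t' - t) := mul_pos (pow_pos h0pos 2) (sub_pos.2 htt')
      calc rhoF r s t = ellF θ r s t := heq
        _ < ellF θ r s t' := by linarith
        _ ≤ rhoF r s t' := ell_le_rho h0 h1 _ _ _
  · -- rate ≥ 1/4 increase in r
    intro r r' s t hr hrr' hs ht
    show rhoF r s t + (r' - r) / 4 ≤ rhoF r' s t
    obtain ⟨θ, h0, h1, heq⟩ := exists_ell_eq_rho r s t
    have ca : (1:ℝ)/4 ≤ 1/2 - θ := by linarith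
    have cb : (1:ℝ)/4 ≤ 1/2 + θ - θ^2 := by nlinarith
    have key : ellF θ r s t + (r' - r) / 4 ≤ ellF θ r' s t := by
      unfold ellF
      rw [abs_of_pos hr, abs_of_pos (lt_trans hr hrr'), abs_of_pos hs]
      have hA : (1/2 - θ) * r + (1/2 + θ - θ^2) * s + (r' - r)/4
          ≤ (1/2 - θ) * r' + (1/2 + θ - θ^2) * s := by nlinarith
      have hB : (1/2 - θ) * s + (1/2 + θ - θ^2) * r + (r' - r)/4
          ≤ (1/2 - θ) * s + (1/2 + θ - θ^2) * r' := by nlinarith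
      have h3 : max ((1/2 - θ) * r + (1/2 + θ - θ^2) * s)
            ((1/2 - θ) * s + (1/2 + θ - θ^2) * r) + (r' - r)/4
          ≤ max ((1/2 - θ) * r' + (1/2 + θ - θ^2) * s)
            ((1/2 - θ) * s + (1/2 + θ - θ^2) * r') := by
        rcases max_cases ((1/2 - θ) * r + (1/2 + θ - θ^2) * s)
          ((1/2 - θ) * s + (1/2 + θ - θ^2) * r) with ⟨hm, _⟩ | ⟨hm, _⟩ <;> rw [hm]
        · exact le_trans hA (le_max_left _ _)
        · exact le_trans hB (le_max_right _ _)
      linarith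
    calc rhoF r s t + (r' - r) / 4 = ellF θ r s t + (r' - r) / 4 := by rw [heq]
      _ ≤ ellF θ r' s t := key
      _ ≤ rhoF r' s t := ell_le_rho h0 h1 _ _ _
end

section
/- Let F be a Banach space with norm ‖·‖, let ‖·‖_I be another norm on F with ‖f‖ ≤ ‖f‖_I ≤ 2‖f‖, and suppose P : F → F is a bounded projection and d ∈ ℕ is such that ‖Pf‖ + 2^{-(2d+4)}‖f − Pf‖ ≤ ‖f‖ for all f, and β is a seminorm on F with β(g) ≤ 2·2^{-2d}‖g‖ for g in the range of (I − P), β(g) ≤ 2‖g‖ for all g, and ‖f‖_I² = ‖f‖² + 2^{-7}β(f)². Then ‖f‖_I ≥ ‖Pf‖_I + 2^{-(2d+7)}‖f − Pf‖_I for all f ∈ F. -/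
/-- Abstract form of Lemma 8.3: if `‖·‖_I` is given by `‖f‖_I² = ‖f‖² + 2⁻⁷β(f)²`
with `‖f‖ ≤ ‖f‖_I ≤ 2‖f‖`, `P` is a bounded projection with
`‖Pf‖ + 2^{-(2d+4)}‖f−Pf‖ ≤ ‖f‖`, and the seminorm `β` satisfies
`β ≤ 2‖·‖` and `β(g) ≤ 2·2^{-2d}‖g‖` on the range of `I − P`, then
`‖f‖_I ≥ ‖Pf‖_I + 2^{-(2d+7)}‖f − Pf‖_I`. -/
theorem stmt6 {F : Type*} [NormedAddCommGroup F] [NormedSpace ℝ F] [CompleteSpace F]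
    (NI β : F → ℝ) (P : F →L[ℝ] F) (d : ℕ)
    (hproj : ∀ f, P (P f) = P f)
    (hsand : ∀ f, ‖f‖ ≤ NI f ∧ NI f ≤ 2 * ‖f‖)
    (hP : ∀ f, ‖P f‖ + ((2 : ℝ) ^ (2 * d + 4))⁻¹ * ‖f - P f‖ ≤ ‖f‖)
    (hβ0 : ∀ f, 0 ≤ β f)
    (hβadd : ∀ f g, β (f + g) ≤ β f + β g)
    (hβsmul : ∀ (a : ℝ) (f : F), β (a • f) = |a| * β f)
    (hβrange : ∀ f, β (f - P f) ≤ 2 * ((2 : ℝ) ^ (2 * d))⁻¹ * ‖f - P f‖)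
    (hβbd : ∀ f, β f ≤ 2 * ‖f‖)
    (hNI : ∀ f, (NI f) ^ 2 = ‖f‖ ^ 2 + ((2 : ℝ) ^ 7)⁻¹ * (β f) ^ 2) :
    ∀ f, NI (P f) + ((2 : ℝ) ^ (2 * d + 7))⁻¹ * NI (f - P f) ≤ NI f := by
  intro f
  have ht : (0:ℝ) < (2:ℝ) ^ (2*d) := by positivity
  have hs : (0:ℝ) < ((2:ℝ) ^ (2*d))⁻¹ := by positivity
  set s : ℝ := ((2:ℝ) ^ (2*d))⁻¹ with hsdef
  have hq4 : ((2:ℝ) ^ (2*d+4))⁻¹ = s / 16 := by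
    rw [pow_add, mul_inv, hsdef]; norm_num; ring
  have hq7 : ((2:ℝ) ^ (2*d+7))⁻¹ = s / 128 := by
    rw [pow_add, mul_inv, hsdef]; norm_num; ring
  obtain ⟨hA1, hA2⟩ := hsand f
  obtain ⟨hB1, hB2⟩ := hsand (P f)
  obtain ⟨hC1, hC2⟩ := hsand (f - P f)
  have ha : (0:ℝ) ≤ ‖f‖ := norm_nonneg _
  have hb : (0:ℝ) ≤ ‖P f‖ := norm_nonneg _
  have hc : (0:ℝ) ≤ ‖f - P f‖ := norm_nonneg _
  -- β (P f) ≤ β f + 2 s ‖f - P f‖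
  have hbsub : β (P f) ≤ β f + 2 * s * ‖f - P f‖ := by
    have h1 : β (P f - f) = β (f - P f) := by
      have := hβsmul (-1) (f - P f)
      simp only [neg_one_smul, neg_sub, abs_neg, abs_one, one_mul] at this
      exact this
    have h2 : β (P f) ≤ β f + β (P f - f) := by
      have := hβadd f (P f - f)
      simpa using this
    have := hβrange f
    linarith
  -- key quadratic inequality
  have key : NI (P f) ^ 2 + s / 32 * ((‖f‖ + ‖P f‖) * ‖f - P f‖) ≤ NI f ^ 2 := by
    rw [hNI f, hNI (P f)]
    have hPf := hP f
    rw [hq4] at hPf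
    have h1 : s / 16 * (‖f - P f‖ * (‖f‖ + ‖P f‖)) ≤ ‖f‖^2 - ‖P f‖^2 := by
      nlinarith [mul_le_mul_of_nonneg_right
        (by linarith : s / 16 * ‖f - P f‖ ≤ ‖f‖ - ‖P f‖)
        (by linarith : (0:ℝ) ≤ ‖f‖ + ‖P f‖)]
    have h2 : β (P f) ^ 2 - β f ^ 2 ≤ 2 * s * ‖f - P f‖ * (2*‖f‖ + 2*‖P f‖) := by
      have hsum : 0 ≤ β (P f) + β f := by
        have := hβ0 f; have := hβ0 (P f); linarith
      have hd : β (P f) - β f ≤ 2 * s * ‖f - P f‖ := by linarith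
      have hcr : (0:ℝ) ≤ 2 * s * ‖f - P f‖ := by positivity
      have hsum2 : β (P f) + β f ≤ 2*‖f‖ + 2*‖P f‖ := by
        have := hβbd f; have := hβbd (P f); linarith
      nlinarith [mul_le_mul_of_nonneg_right hd hsum,
        mul_le_mul_of_nonneg_left hsum2 hcr]
    norm_num
    nlinarith [h1, h2]
  rw [hq7]
  by_cases hf : f = 0
  · subst hf
    simp only [map_zero, sub_zero, norm_zero] at *
    have h0 : NI (0:F) = 0 := le_antisymm (by linarith) (by linarith)
    rw [h0]
    nlinarith [hs]
  · have hfa : (0:ℝ) < ‖f‖ := norm_pos_iff.mpr hf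
    have hS : (0:ℝ) < NI f + NI (P f) := by linarith
    have hR0 : 0 ≤ NI (f - P f) := le_trans hc hC1
    have hmain : (s / 128 * NI (f - P f)) * (NI f + NI (P f)) ≤
        (NI f - NI (P f)) * (NI f + NI (P f)) := by
      have h3 : NI (f - P f) * (NI f + NI (P f)) ≤ (2*‖f - P f‖) * (2*‖f‖ + 2*‖P f‖) :=
        mul_le_mul hC2 (by linarith) (by linarith) (by positivity)
      have h4 : s / 128 * (NI (f - P f) * (NI f + NI (P f))) ≤
          s / 128 * ((2*‖f - P f‖) * (2*‖f‖ + 2*‖P f‖)) :=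
        mul_le_mul_of_nonneg_left h3 (by positivity)
      have e2 : s / 128 * ((2*‖f - P f‖) * (2*‖f‖ + 2*‖P f‖)) =
          s / 32 * ((‖f‖ + ‖P f‖) * ‖f - P f‖) := by ring
      nlinarith [h4, key]
    have := le_of_mul_le_mul_right hmain hS
    linarith
end

section
/- In the tree space E of Definition 3.1, if every F_σ (σ ∈ [T]) is reflexive, then the set Φ = ⋃_{σ∈[T]} B_{E_σ} is weakly compact in E, where E_σ consists of elements supported by the branch σ. -/
/-!
Let `u` be an ultrafilter containing `Φ`. Since `Φ` is bounded, every coordinate converges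
along `u`, say to `y η`. A point of `Φ` has its nonzero coordinates on a single branch, so any
two nodes where `y` is nonzero are comparable, and the support of `y` lies on one branch `σ`.
The truncations `∑_{η ∈ T_n} y η • e η` are weak limits of the contractive projections `Q n`
along `u`, hence lie in the unit ball of `E_σ`; its weak compactness gives a point `x` there
with coordinates `y`. Finally `u` is bounded and converges to `x` against every coordinate
functional, and these span a dense subspace of the dual, so `u` converges weakly to `x`.
-/

/-- The initial segment of length `n` of an infinite sequence `σ`. -/
def initSeg {Λ : Type*} (σ : ℕ → Λ) (n : ℕ) : List Λ := List.ofFn (fun i : Fin n => σ i)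

/-- `σ` is an infinite branch of the (unrooted) tree `T`. -/
def IsBranch {Λ : Type*} (T : Set (List Λ)) (σ : ℕ → Λ) : Prop :=
  ∀ n : ℕ, initSeg σ (n + 1) ∈ T

/-- `η ⊂ σ`: `η` is an initial segment of `σ`. -/
def IsInitOf {Λ : Type*} (η : List Λ) (σ : ℕ → Λ) : Prop := η = initSeg σ η.length

open Filter Topology NNReal

section Branches

variable {Λ : Type*}

lemma initSeg_succ (σ : ℕ → Λ) (n : ℕ) : initSeg σ (n + 1) = initSeg σ n ++ [σ n] := by
  rw [initSeg, initSeg, List.ofFn_succ_last]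
  rfl

lemma initSeg_prefix_initSeg (σ : ℕ → Λ) {m n : ℕ} (h : m ≤ n) : initSeg σ m <+: initSeg σ n := by
  induction n, h using Nat.le_induction with
  | base => exact List.prefix_refl _
  | succ n _ ih => exact ih.trans (initSeg_succ σ n ▸ List.prefix_append _ _)

lemma IsInitOf.prefix_or_prefix {η ν : List Λ} {σ : ℕ → Λ} (hη : IsInitOf η σ)
    (hν : IsInitOf ν σ) : η <+: ν ∨ ν <+: η := by
  rw [hη, hν]
  exact (le_total η.length ν.length).imp (initSeg_prefix_initSeg σ) (initSeg_prefix_initSeg σ)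

lemma prefix_or_prefix_of_ne_zero {α M : Type*} [Zero M] {T : Set (List Λ)}
    {c : List Λ → α → M} {σ : ℕ → Λ} {a : α} (ha : ∀ η ∈ T, ¬ IsInitOf η σ → c η a = 0)
    {η ν : List Λ} (hη : η ∈ T) (hν : ν ∈ T) (hηa : c η a ≠ 0) (hνa : c ν a ≠ 0) :
    η <+: ν ∨ ν <+: η :=
  (not_not.1 (mt (ha η hη) hηa)).prefix_or_prefix (not_not.1 (mt (ha ν hν) hνa))

lemma exists_initSeg_eq {L : ℕ → List Λ} (hlen : ∀ n, (L n).length = n)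
    (hL : ∀ n, L n <+: L (n + 1)) : ∃ σ : ℕ → Λ, ∀ n, initSeg σ n = L n := by
  refine ⟨fun k => (L (k + 1))[k]'(by simp [hlen]), fun n => ?_⟩
  induction n with
  | zero => rw [List.length_eq_zero_iff.1 (hlen 0)]; rfl
  | succ n ih =>
    rw [initSeg_succ, ih, List.prefix_iff_eq_take.1 (hL n), hlen, List.take_concat_get',
      List.take_of_length_le (hlen _).le]

lemma take_eq_take_of_prefix_or_prefix {η ν : List Λ} (h : η <+: ν ∨ ν <+: η) {n : ℕ}
    (hη : n ≤ η.length) (hν : n ≤ ν.length) : η.take n = ν.take n := by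
  rcases h with h | h
  · rw [List.prefix_iff_eq_take.1 h, List.take_take, min_eq_left hη]
  · rw [List.prefix_iff_eq_take.1 h, List.take_take, min_eq_left hν]

open Classical in
/-- Follow the chain `S` as far as it reaches, then keep descending to children in `T`. -/
noncomputable def chainWalk [Nonempty Λ] (T S : Set (List Λ)) : ℕ → List Λ
  | 0 => []
  | n + 1 =>
    if h : ∃ η ∈ S, n + 1 ≤ η.length then h.choose.take (n + 1)
    else chainWalk T S n ++ [Classical.epsilon fun a => chainWalk T S n ++ [a] ∈ T]

variable {T S : Set (List Λ)}

section Walk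

variable [Nonempty Λ]

lemma chainWalk_eq_take (hchain : ∀ η ∈ S, ∀ ν ∈ S, η <+: ν ∨ ν <+: η) {η : List Λ}
    (hη : η ∈ S) {n : ℕ} (hn : n ≤ η.length) : chainWalk T S n = η.take n := by
  cases n with
  | zero => rfl
  | succ n =>
    have h : ∃ ν ∈ S, n + 1 ≤ ν.length := ⟨η, hη, hn⟩
    rw [chainWalk, dif_pos h]
    exact take_eq_take_of_prefix_or_prefix (hchain _ h.choose_spec.1 _ hη) h.choose_spec.2 hn

lemma length_chainWalk (hchain : ∀ η ∈ S, ∀ ν ∈ S, η <+: ν ∨ ν <+: η) (n : ℕ) :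
    (chainWalk T S n).length = n := by
  induction n with
  | zero => rfl
  | succ n ih =>
    by_cases h : ∃ η ∈ S, n + 1 ≤ η.length
    · obtain ⟨η, hη, hn⟩ := h
      simpa [chainWalk_eq_take hchain hη hn] using hn
    · simp [chainWalk, dif_neg h, ih]

lemma chainWalk_prefix_succ (hchain : ∀ η ∈ S, ∀ ν ∈ S, η <+: ν ∨ ν <+: η) (n : ℕ) :
    chainWalk T S n <+: chainWalk T S (n + 1) := by
  by_cases h : ∃ η ∈ S, n + 1 ≤ η.length
  · obtain ⟨η, hη, hn⟩ := h
    rw [chainWalk_eq_take hchain hη hn, chainWalk_eq_take hchain hη (by omega),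
      List.take_isPrefix_take]
    omega
  · rw [chainWalk.eq_2, dif_neg h]
    exact List.prefix_append _ _

lemma chainWalk_succ_mem (hST : S ⊆ T)
    (htree : ∀ l ∈ T, ∀ l' : List Λ, l' ≠ [] → l' <+: l → l' ∈ T)
    (hpruned : ∀ l ∈ T, ∃ a : Λ, l ++ [a] ∈ T) (hroot : ∃ a : Λ, [a] ∈ T) (n : ℕ) :
    chainWalk T S (n + 1) ∈ T := by
  have step : ∀ n, chainWalk T S n = [] ∨ chainWalk T S n ∈ T → chainWalk T S (n + 1) ∈ T := by
    intro n hn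
    rw [chainWalk]
    split_ifs with h
    · obtain ⟨hS, hlen⟩ := h.choose_spec
      refine htree _ (hST hS) _ ?_ (List.take_prefix _ _)
      rw [Ne, List.take_eq_nil_iff, ← List.length_eq_zero_iff]
      omega
    · refine Classical.epsilon_spec (hn.elim (fun h => ?_) (hpruned _))
      rw [h]
      exact hroot
  induction n with
  | zero => exact step 0 (Or.inl rfl)
  | succ n ih => exact step _ (Or.inr ih)

end Walk

theorem exists_isBranch_of_chain
    (htree : ∀ l ∈ T, ∀ l' : List Λ, l' ≠ [] → l' <+: l → l' ∈ T)
    (hpruned : ∀ l ∈ T, ∃ a : Λ, l ++ [a] ∈ T) (hroot : ∃ a : Λ, [a] ∈ T) (hST : S ⊆ T)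
    (hchain : ∀ η ∈ S, ∀ ν ∈ S, η <+: ν ∨ ν <+: η) :
    ∃ σ : ℕ → Λ, IsBranch T σ ∧ ∀ η ∈ S, IsInitOf η σ := by
  have : Nonempty Λ := hroot.nonempty
  obtain ⟨σ, hσ⟩ := exists_initSeg_eq (length_chainWalk (T := T) hchain)
    (chainWalk_prefix_succ hchain)
  refine ⟨σ, fun n => hσ (n + 1) ▸ chainWalk_succ_mem hST htree hpruned hroot n, fun η hη => ?_⟩
  rw [IsInitOf, hσ, chainWalk_eq_take hchain hη le_rfl, List.take_length]

end Branches

theorem Equiv.isCompact_image_of_forall_ultrafilter {X Y : Type*} [TopologicalSpace Y]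
    (e : X ≃ Y) {s : Set X}
    (h : ∀ u : Ultrafilter X, s ∈ u → ∃ x ∈ s, Tendsto e u (𝓝 (e x))) :
    IsCompact (e '' s) := by
  rw [isCompact_iff_ultrafilter_le_nhds']
  intro f hf
  obtain ⟨x, hx, hfx⟩ := h (f.map e.symm) (by rwa [Ultrafilter.mem_map, ← e.image_eq_preimage_symm])
  refine ⟨e x, Set.mem_image_of_mem e hx, ?_⟩
  simpa [Tendsto, Filter.map_map] using hfx

theorem IsCompact.exists_forall_eq_of_tendsto {X Y ι α : Type*} [TopologicalSpace X]
    [TopologicalSpace Y] [T2Space Y] {K : Set X} (hK : IsCompact K) {l : Filter α} [l.NeBot]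
    {z : α → X} (hz : ∀ᶠ n in l, z n ∈ K) {g : ι → X → Y} (hg : ∀ i, Continuous (g i))
    {c : ι → Y} (h : ∀ i, Tendsto (fun n => g i (z n)) l (𝓝 (c i))) :
    ∃ x ∈ K, ∀ i, g i x = c i := by
  obtain ⟨x, hxK, hx⟩ := hK.exists_clusterPt (f := map z l) (le_principal_iff.2 hz)
  exact ⟨x, hxK, fun i => eq_of_nhds_neBot
    (hx.map (hg i).continuousAt (tendsto_map'_iff.2 (h i))).neBot⟩

theorem Ultrafilter.eq_zero_or_eq_zero_of_tendsto {α ι M : Type*} [TopologicalSpace M] [T2Space M]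
    [Zero M] {u : Ultrafilter α} {c : ι → α → M} {y : ι → M}
    (hy : ∀ i, Tendsto (c i) u (𝓝 (y i))) {i j : ι}
    (h : ∀ᶠ a in (u : Filter α), c i a = 0 ∨ c j a = 0) : y i = 0 ∨ y j = 0 := by
  refine (Ultrafilter.eventually_or.1 h).imp (fun hi => ?_) (fun hj => ?_)
  · exact tendsto_nhds_unique (hy i) (tendsto_const_nhds.congr' (hi.mono fun _ h => h.symm))
  · exact tendsto_nhds_unique (hy j) (tendsto_const_nhds.congr' (hj.mono fun _ h => h.symm))

section WeakTopology

variable {𝕜 E : Type*} [RCLike 𝕜] [NormedAddCommGroup E] [NormedSpace 𝕜 E]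

theorem tendsto_toWeakSpace_iff {α : Type*} {l : Filter α} {f : α → E} {x : E} :
    Tendsto (fun a => toWeakSpace 𝕜 E (f a)) l (𝓝 (toWeakSpace 𝕜 E x)) ↔
      ∀ φ : StrongDual 𝕜 E, Tendsto (fun a => φ (f a)) l (𝓝 (φ x)) :=
  WeakBilin.tendsto_iff_forall_eval_tendsto _ fun _ _ hab =>
    (SeparatingDual.eq_iff_forall_dual_eq (R := 𝕜)).2 fun φ => LinearMap.congr_fun hab φ

theorem Ultrafilter.exists_tendsto_dual_of_eventually_norm_le {u : Ultrafilter E} {C : ℝ}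
    (hu : ∀ᶠ a in (u : Filter E), ‖a‖ ≤ C) (φ : StrongDual 𝕜 E) : ∃ c, Tendsto φ u (𝓝 c) := by
  obtain ⟨c, -, hc⟩ := (isCompact_closedBall (0 : 𝕜) (‖φ‖ * C)).ultrafilter_le_nhds (u.map φ)
    (le_principal_iff.2 (hu.mono fun a ha => by simpa using φ.le_opNorm_of_le ha))
  exact ⟨c, hc⟩

/-- On a bounded set, the evaluations `φ ↦ φ a` are uniformly Lipschitz, so the functionals
along which a bounded filter converges form a closed subspace of the dual. -/
theorem tendsto_toWeakSpace_of_dense_span {l : Filter E} {C : ℝ≥0} (hl : ∀ᶠ a in l, ‖a‖ ≤ C)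
    {D : Set (StrongDual 𝕜 E)} (hD : (Submodule.span 𝕜 D).topologicalClosure = ⊤) {x : E}
    (hx : ∀ φ ∈ D, Tendsto φ l (𝓝 (φ x))) :
    Tendsto (toWeakSpace 𝕜 E) l (𝓝 (toWeakSpace 𝕜 E x)) := by
  set B := Metric.closedBall (0 : E) C
  have hB : Set.range ((↑) : B → E) ∈ l := by
    rw [Subtype.range_coe]; exact hl.mono fun a ha => mem_closedBall_zero_iff.2 ha
  have hequi : Equicontinuous fun (b : B) (φ : StrongDual 𝕜 E) => φ b :=
    (LipschitzWith.uniformEquicontinuous _ C fun b => LipschitzWith.of_dist_le_mul fun φ ψ => by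
      simpa [dist_eq_norm, mul_comm] using
        (φ - ψ).le_opNorm_of_le (mem_closedBall_zero_iff.1 b.2)).equicontinuous
  have hclosed : IsClosed {φ : StrongDual 𝕜 E | Tendsto (fun a => φ a) l (𝓝 (φ x))} := by
    convert hequi.isClosed_setOfPred_tendsto (l := comap (↑) l)
      (ContinuousLinearMap.apply 𝕜 𝕜 x).continuous using 3 with φ
    conv_lhs => rw [← map_comap_of_mem hB]
    exact tendsto_map'_iff
  have hspan : (Submodule.span 𝕜 D : Set (StrongDual 𝕜 E)) ⊆
      {φ | Tendsto (fun a => φ a) l (𝓝 (φ x))} := by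
    intro φ hφ
    induction hφ using Submodule.span_induction with
    | mem φ hφ => exact hx φ hφ
    | zero => simpa using tendsto_const_nhds
    | add φ ψ _ _ hφ hψ => simpa using hφ.add hψ
    | smul c φ _ hφ => simpa using hφ.const_smul c
  rw [← hclosed.closure_subset_iff, ← Submodule.topologicalClosure_coe, hD] at hspan
  exact (tendsto_toWeakSpace_iff (f := id)).2 fun φ => hspan trivial

end WeakTopology

section Biorthogonal

variable {ι E : Type*} [NormedAddCommGroup E] [NormedSpace ℝ E] {T : Set ι} {e : ι → E}
  {coord : ι → E →L[ℝ] ℝ}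

lemma coord_sum_smul [DecidableEq ι]
    (hbiorth : ∀ η ∈ T, ∀ ν ∈ T, coord η (e ν) = if η = ν then (1 : ℝ) else 0)
    {F : Finset ι} (hF : ↑F ⊆ T) (y : ι → ℝ) {η : ι} (hη : η ∈ T) :
    coord η (∑ ν ∈ F, y ν • e ν) = if η ∈ F then y η else 0 := by
  rw [map_sum, ← Finset.sum_ite_eq]
  refine Finset.sum_congr rfl fun ν hν => ?_
  rw [map_smul, hbiorth η hη ν (hF hν), smul_eq_mul]
  split_ifs <;> simp_all

lemma norm_sum_smul_le_of_tendsto {l : Filter E} [l.NeBot] {r : ℝ} (hl : ∀ᶠ a in l, ‖a‖ ≤ r)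
    {y : ι → ℝ} (hy : ∀ η, Tendsto (coord η) l (𝓝 (y η))) {F : Finset ι} {P : E →L[ℝ] E}
    (hP : ∀ a, P a = ∑ η ∈ F, coord η a • e η) (hPnorm : ‖P‖ ≤ 1) :
    ‖∑ η ∈ F, y η • e η‖ ≤ r := by
  have hlim : Tendsto P l (𝓝 (∑ η ∈ F, y η • e η)) := by
    simpa only [← hP] using tendsto_finsetSum F fun η _ => (hy η).smul_const (e η)
  refine le_of_tendsto hlim.norm (hl.mono fun a ha => ?_)
  simpa using (P.le_of_opNorm_le hPnorm a).trans (by simpa using ha)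

theorem exists_mem_closedBall_coord_eq [DecidableEq ι]
    (hbiorth : ∀ η ∈ T, ∀ ν ∈ T, coord η (e ν) = if η = ν then (1 : ℝ) else 0)
    {Tn : ℕ → Finset ι} (hTnsub : ∀ n, ↑(Tn n) ⊆ T) (hTnmono : Monotone Tn)
    (hTnunion : ∀ η ∈ T, ∃ n, η ∈ Tn n) {Q : ℕ → E →L[ℝ] E}
    (hQ : ∀ (n : ℕ) (x : E), Q n x = ∑ η ∈ Tn n, coord η x • e η) (hQnorm : ∀ n, ‖Q n‖ ≤ 1)
    {l : Filter E} [l.NeBot] {r : ℝ} (hl : ∀ᶠ a in l, ‖a‖ ≤ r) {y : ι → ℝ}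
    (hy : ∀ η, Tendsto (coord η) l (𝓝 (y η))) {P : Set ι} (hyP : ∀ η ∈ T, η ∉ P → y η = 0)
    (hK : IsCompact (toWeakSpace ℝ E ''
      ({x | ∀ η ∈ T, η ∉ P → coord η x = 0} ∩ Metric.closedBall 0 r))) :
    ∃ x ∈ {x : E | ∀ η ∈ T, η ∉ P → coord η x = 0} ∩ Metric.closedBall 0 r,
      ∀ η ∈ T, coord η x = y η := by
  set z : ℕ → E := fun n => ∑ η ∈ Tn n, y η • e η
  have hz : ∀ n, toWeakSpace ℝ E (z n) ∈ toWeakSpace ℝ E ''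
      ({x | ∀ η ∈ T, η ∉ P → coord η x = 0} ∩ Metric.closedBall 0 r) := by
    refine fun n => Set.mem_image_of_mem _ ⟨fun η hη hηP => ?_, ?_⟩
    · rw [coord_sum_smul hbiorth (hTnsub n) y hη, hyP η hη hηP, ite_self]
    · exact mem_closedBall_zero_iff.2 (norm_sum_smul_le_of_tendsto hl hy (hQ n) (hQnorm n))
  have hzy : ∀ η : T, Tendsto (fun n => coord η ((toWeakSpace ℝ E).symm (toWeakSpace ℝ E (z n))))
      atTop (𝓝 (y η)) := by
    simp only [LinearEquiv.symm_apply_apply]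
    rintro ⟨η, hη⟩
    obtain ⟨N, hN⟩ := hTnunion η hη
    refine tendsto_const_nhds.congr' ((eventually_ge_atTop N).mono fun n hn => ?_)
    exact (coord_sum_smul hbiorth (hTnsub n) y hη).trans (if_pos (hTnmono hn hN)) |>.symm
  obtain ⟨_, ⟨x, hx, rfl⟩, hxy⟩ := hK.exists_forall_eq_of_tendsto (Eventually.of_forall hz)
    (g := fun (η : T) w => coord η ((toWeakSpace ℝ E).symm w))
    (fun η => WeakBilin.eval_continuous _ (coord η)) hzy
  exact ⟨x, hx, fun η hη => by simpa using hxy ⟨η, hη⟩⟩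

end Biorthogonal

theorem stmt11_general {Λ : Type*} [DecidableEq Λ]
    (T : Set (List Λ))
    (htree : ∀ l ∈ T, ∀ l' : List Λ, l' ≠ [] → l' <+: l → l' ∈ T)
    (hpruned : ∀ l ∈ T, ∃ a : Λ, l ++ [a] ∈ T)
    {E : Type*} [NormedAddCommGroup E] [NormedSpace ℝ E]
    (e : List Λ → E) (coord : List Λ → E →L[ℝ] ℝ)
    (hbiorth : ∀ η ∈ T, ∀ ν ∈ T, coord η (e ν) = if η = ν then (1 : ℝ) else 0)
    (Tn : ℕ → Finset (List Λ))
    (hTnsub : ∀ n, ↑(Tn n) ⊆ T) (hTnmono : Monotone Tn)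
    (hTnunion : ∀ η ∈ T, ∃ n, η ∈ Tn n)
    (Q : ℕ → E →L[ℝ] E)
    (hQ : ∀ (n : ℕ) (x : E), Q n x = ∑ η ∈ Tn n, coord η x • e η)
    (hQnorm : ∀ n, ‖Q n‖ ≤ 1)
    (hshrinking : (Submodule.span ℝ
        (Set.range fun η : {l : List Λ // l ∈ T} =>
          (coord η.1 : StrongDual ℝ E))).topologicalClosure = ⊤)
    (Eσ : (ℕ → Λ) → Set E)
    (hEσ : ∀ σ : ℕ → Λ, Eσ σ = {x : E | ∀ η ∈ T, ¬ IsInitOf η σ → coord η x = 0})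
    (hrefl : ∀ σ : ℕ → Λ, IsBranch T σ →
      IsCompact (toWeakSpace ℝ E '' (Eσ σ ∩ Metric.closedBall 0 1))) :
    IsCompact (toWeakSpace ℝ E ''
      (⋃ σ ∈ {σ : ℕ → Λ | IsBranch T σ}, Eσ σ ∩ Metric.closedBall 0 1)) := by
  refine (toWeakSpace ℝ E).toEquiv.isCompact_image_of_forall_ultrafilter fun u hΦu => ?_
  have hball : ∀ᶠ a in (u : Filter E), ‖a‖ ≤ 1 := mem_of_superset hΦu fun a ha => by
    obtain ⟨σ, -, -, ha⟩ := Set.mem_iUnion₂.1 ha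
    exact mem_closedBall_zero_iff.1 ha
  have hroot : ∃ a : Λ, [a] ∈ T := by
    obtain ⟨σ, hσ, -⟩ := Set.mem_iUnion₂.1 (u.nonempty_of_mem hΦu).some_mem
    exact ⟨σ 0, hσ 0⟩
  choose y hy using fun η => u.exists_tendsto_dual_of_eventually_norm_le hball (coord η)
  have hchain : ∀ η ∈ T, ∀ ν ∈ T, y η ≠ 0 → y ν ≠ 0 → η <+: ν ∨ ν <+: η := by
    intro η hη ν hν hyη hyν
    by_contra hnot
    refine (u.eq_zero_or_eq_zero_of_tendsto hy (mem_of_superset hΦu fun a ha => ?_)).elim hyη hyν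
    obtain ⟨σ, -, ha, -⟩ := Set.mem_iUnion₂.1 ha
    rw [hEσ] at ha
    exact or_iff_not_and_not.2 fun h => hnot (prefix_or_prefix_of_ne_zero ha hη hν h.1 h.2)
  obtain ⟨σ, hσ, hyσ⟩ := exists_isBranch_of_chain (S := {η | η ∈ T ∧ y η ≠ 0}) htree hpruned
    hroot (fun _ h => h.1) fun η hη ν hν => hchain η hη.1 ν hν.1 hη.2 hν.2
  obtain ⟨x, hx, hxy⟩ := exists_mem_closedBall_coord_eq (P := {η | IsInitOf η σ}) hbiorth hTnsub
    hTnmono hTnunion hQ hQnorm hball hy (fun η hη hP => not_not.1 fun h => hP (hyσ η ⟨hη, h⟩))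
    (hEσ σ ▸ hrefl σ hσ)
  refine ⟨x, Set.mem_biUnion hσ (by rwa [hEσ]), ?_⟩
  refine tendsto_toWeakSpace_of_dense_span (C := 1) (x := x) (by simpa using hball) hshrinking ?_
  rintro _ ⟨⟨η, hη⟩, rfl⟩
  simpa [hxy η hη] using hy η

/-- Lemma 3.6: in the tree space `E` of Definition 3.1, if every branch space `F_σ` (i.e.
every branch subspace `E_σ = {x : coord η x = 0 for η ⊄ σ}`, which is isometric to `F_σ`)
is reflexive — expressed by weak compactness of its unit ball — then
`Φ = ⋃_{σ∈[T]} B_{E_σ}` is compact in the weak topology of `E`. The tree basis is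
shrinking in this situation (its coordinate functionals span a dense subspace of the
dual), which is included as a hypothesis. -/
theorem stmt11 {Λ : Type*} [Countable Λ] [DecidableEq Λ]
    (T : Set (List Λ)) (hTne : T.Nonempty)
    (hT0 : ∀ l ∈ T, l ≠ ([] : List Λ))
    (htree : ∀ l ∈ T, ∀ l' : List Λ, l' ≠ [] → l' <+: l → l' ∈ T)
    (hpruned : ∀ l ∈ T, ∃ a : Λ, l ++ [a] ∈ T)
    {E : Type*} [NormedAddCommGroup E] [NormedSpace ℝ E] [CompleteSpace E]
    (e : List Λ → E) (coord : List Λ → E →L[ℝ] ℝ)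
    (hbiorth : ∀ η ∈ T, ∀ ν ∈ T, coord η (e ν) = if η = ν then (1 : ℝ) else 0)
    (Tn : ℕ → Finset (List Λ))
    (hTnsub : ∀ n, ↑(Tn n) ⊆ T) (hTnmono : Monotone Tn)
    (hTnunion : ∀ η ∈ T, ∃ n, η ∈ Tn n)
    (Q : ℕ → E →L[ℝ] E)
    (hQ : ∀ (n : ℕ) (x : E), Q n x = ∑ η ∈ Tn n, coord η x • e η)
    (hQnorm : ∀ n, ‖Q n‖ ≤ 1)
    (hbasis : ∀ x : E, Filter.Tendsto (fun n => Q n x) Filter.atTop (nhds x))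
    (hshrinking : (Submodule.span ℝ
        (Set.range fun η : {l : List Λ // l ∈ T} =>
          (coord η.1 : StrongDual ℝ E))).topologicalClosure = ⊤)
    (Eσ : (ℕ → Λ) → Set E)
    (hEσ : ∀ σ : ℕ → Λ, Eσ σ = {x : E | ∀ η ∈ T, ¬ IsInitOf η σ → coord η x = 0})
    (hrefl : ∀ σ : ℕ → Λ, IsBranch T σ →
      IsCompact (toWeakSpace ℝ E '' (Eσ σ ∩ Metric.closedBall 0 1))) :
    IsCompact (toWeakSpace ℝ E ''
      (⋃ σ ∈ {σ : ℕ → Λ | IsBranch T σ}, Eσ σ ∩ Metric.closedBall 0 1)) :=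
  stmt11_general T htree hpruned e coord hbiorth Tn hTnsub hTnmono hTnunion Q hQ hQnorm hshrinking
    Eσ hEσ hrefl
end

section
/- Let (F, ‖·‖) be the space from Definition 6.3 (the space F(e₁,e₂,…) built from a normalized monotone basis of X over ℓ²(X)). Then (7/8)‖f‖_{ℓ²(X)} ≤ ‖f‖ ≤ ‖f‖_{ℓ²(X)} for all f, the basis f₁, f₂, … is monotone for ‖·‖, and for each d the unit ball of (F_d, ‖·‖) equals the convex hull of the unit balls of (F_j, |·|_j) for j = 1,…,d; in particular (F_d, ‖·‖) is a rational space. -/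
/-!
Write `B_d` for the unit ball of `(F_d, |·|_d)` and `K` for the closed convex hull of all `B_d`,
the unit ball of `NF`. Since `P_n y ∈ B_n` whenever `‖y‖ ≤ 1` and `P_n y → y`, the unit ball of
`ℓ²(X)` lies in `K`; every `B_d`, hence `K`, lies in the `ℓ²`-ball of radius `8/7`. Homogeneity
turns these inclusions into the two norm estimates. Each `P_n` maps every `B_d` into itself,
hence `K` into itself, which is monotonicity. For `j > d`, on `F_d` one has
`|·|_d ≤ (1 - 2^{-(2d+2)})‖·‖ ≤ (1 - 2^{-(2j+1)})‖·‖ ≤ |·|_j`, so `P_d` maps every `B_j` into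
`B_1 ∪ ⋯ ∪ B_d`, and `K` into the convex hull of that union, a polytope and thus closed.
As `P_d` fixes `F_d`, the `NF`-ball of `F_d` is this polytope.
-/

open Set Filter

theorem le_of_le_one_imp_le_one {Y : Type*} [SMul ℝ Y] {f g : Y → ℝ}
    (hf : ∀ (a : ℝ) (y : Y), f (a • y) = |a| * f y)
    (hg : ∀ (a : ℝ) (y : Y), g (a • y) = |a| * g y) (hg0 : ∀ y, 0 ≤ g y)
    (h : ∀ y, g y ≤ 1 → f y ≤ 1) (y : Y) : f y ≤ g y := by
  rcases (hg0 y).eq_or_lt with h0 | h0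
  · -- `g` vanishes on the whole ray through `y`, so `t * f y ≤ 1` for every `t > 0`
    rw [← h0]
    by_contra! hpos
    have h2 := h ((2 / f y) • y) (by rw [hg, ← h0, mul_zero]; exact zero_le_one)
    rw [hf, abs_of_pos (by positivity), div_mul_cancel₀ _ hpos.ne'] at h2
    norm_num at h2
  · have h1 := h ((g y)⁻¹ • y) (by rw [hg, abs_of_pos (inv_pos.2 h0), inv_mul_cancel₀ h0.ne'])
    rwa [hf, abs_of_pos (inv_pos.2 h0), inv_mul_le_iff₀ h0, mul_one] at h1

theorem Set.MapsTo.closure_convexHull {E F : Type*} [AddCommGroup E] [Module ℝ E]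
    [TopologicalSpace E] [AddCommGroup F] [Module ℝ F] [TopologicalSpace F]
    (L : E →L[ℝ] F) {s : Set E} {t : Set F} (h : MapsTo L s t) :
    MapsTo L (closure (convexHull ℝ s)) (closure (convexHull ℝ t)) := by
  refine MapsTo.closure (fun x hx => ?_) L.continuous
  have hL := (L : E →ₗ[ℝ] F).image_convexHull s
  exact convexHull_mono h.image_subset (hL ▸ mem_image_of_mem L hx)

theorem convexHull_biUnion_convexHull {E ι : Type*} [AddCommGroup E] [Module ℝ E]
    (p : ι → Prop) (G : ι → Set E) :
    convexHull ℝ (⋃ (i) (_ : p i), convexHull ℝ (G i)) = convexHull ℝ (⋃ (i) (_ : p i), G i) :=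
  (convexHull_min
    (iUnion₂_subset fun _ hi => convexHull_mono (subset_iUnion₂_of_subset _ hi subset_rfl))
    (convex_convexHull ℝ _)).antisymm
    (convexHull_mono (iUnion₂_mono fun _ _ => subset_convexHull ℝ _))

theorem exists_rat_sum_range_eq_of_le {M : Type*} [AddCommMonoid M] [Module ℝ M]
    (v : ℕ → M) {m n : ℕ} (h : m ≤ n) (q : ℕ → ℚ) :
    ∃ q' : ℕ → ℚ, ∑ i ∈ Finset.range m, (q i : ℝ) • v i
      = ∑ i ∈ Finset.range n, (q' i : ℝ) • v i := by
  refine ⟨fun i => if i < m then q i else 0, ?_⟩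
  rw [← Finset.sum_range_add_sum_Ico _ h, Finset.sum_eq_zero (s := Finset.Ico m n), add_zero]
  · exact Finset.sum_congr rfl fun i hi => by simp [Finset.mem_range.1 hi]
  · intro i hi
    simp [(Finset.mem_Ico.1 hi).1.not_gt]

theorem seven_eighths_le_one_sub_inv_two_pow {k : ℕ} (hk : 3 ≤ k) :
    (7 / 8 : ℝ) ≤ 1 - ((2 : ℝ) ^ k)⁻¹ := by
  have := inv_pow_le_inv_pow_of_le (one_le_two : (1 : ℝ) ≤ 2) hk
  norm_num at this ⊢
  linarith

theorem monotone_span_image_lt {R M : Type*} [Semiring R] [AddCommMonoid M] [Module R M]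
    (v : ℕ → M) : Monotone fun d => Submodule.span R (v '' {i | i < d}) :=
  fun _ _ h => Submodule.span_mono (image_mono fun _ hi => lt_of_lt_of_le hi h)

theorem apply_eq_self_of_mem_span {R M : Type*} [Semiring R] [AddCommMonoid M] [Module R M]
    {v : ℕ → M} {L : M →ₗ[R] M} {m n : ℕ} (hL : ∀ i, L (v i) = if i < n then v i else 0)
    (h : m ≤ n) {y : M} (hy : y ∈ Submodule.span R (v '' {i | i < m})) : L y = y := by
  refine LinearMap.eqOn_span (g := LinearMap.id) ?_ hy
  rintro _ ⟨i, hi, rfl⟩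
  simp [hL, lt_of_lt_of_le hi h]

theorem exists_rat_finset_convexHull_biUnion_range_eq {Y : Type*} [AddCommGroup Y] [Module ℝ Y]
    {fv : ℕ → Y} {B : ℕ → Set Y} {G : ℕ → Finset Y} (hG : ∀ d, B d = convexHull ℝ (G d))
    (hGrat : ∀ d, ∀ g ∈ G d, ∃ q : ℕ → ℚ, g = ∑ i ∈ Finset.range (d + 1), (q i : ℝ) • fv i)
    (d : ℕ) : ∃ G' : Finset Y, convexHull ℝ (⋃ j ∈ Finset.range (d + 1), B j) = convexHull ℝ G'
      ∧ ∀ g ∈ G', ∃ q : ℕ → ℚ, g = ∑ i ∈ Finset.range (d + 1), (q i : ℝ) • fv i := by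
  classical
  refine ⟨(Finset.range (d + 1)).biUnion G, ?_, fun g hg => ?_⟩
  · simp only [hG, convexHull_biUnion_convexHull, Finset.coe_biUnion, Finset.mem_coe]
  · obtain ⟨j, hj, hgj⟩ := Finset.mem_biUnion.1 hg
    obtain ⟨q, rfl⟩ := hGrat j g hgj
    exact exists_rat_sum_range_eq_of_le fv (by simpa using hj) q

section RationalSpace

variable {Y : Type*} [NormedAddCommGroup Y] [NormedSpace ℝ Y]
  {Fd : ℕ → Submodule ℝ Y} {Nd : ℕ → Y → ℝ} {P : ℕ → Y →L[ℝ] Y} {NF : Y → ℝ}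

def subspaceBall (F : Submodule ℝ Y) (N : Y → ℝ) : Set Y := {y | y ∈ F ∧ N y ≤ 1}

theorem closedBall_subset_closure_convexHull
    (hNdle : ∀ d : ℕ, ∀ y ∈ Fd (d + 1),
      Nd (d + 1) y ≤ (1 - ((2 : ℝ) ^ (2 * (d + 1) + 2))⁻¹) * ‖y‖)
    (hPrange : ∀ (n : ℕ) (y : Y), P n y ∈ Fd n)
    (hPlim : ∀ y : Y, Tendsto (fun n => P n y) atTop (nhds y))
    (hPl2 : ∀ (n : ℕ) (y : Y), ‖P n y‖ ≤ ‖y‖) :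
    Metric.closedBall 0 1
      ⊆ closure (convexHull ℝ (⋃ d, subspaceBall (Fd (d + 1)) (Nd (d + 1)))) := by
  intro y hy
  rw [mem_closedBall_zero_iff] at hy
  refine mem_closure_of_tendsto ((hPlim y).comp (tendsto_add_atTop_nat 1))
    (Eventually.of_forall fun n => subset_convexHull ℝ _ (mem_iUnion.2 ⟨n, hPrange _ y, ?_⟩))
  have hPy : ‖P (n + 1) y‖ ≤ 1 := (hPl2 _ y).trans hy
  have hε : (0 : ℝ) < ((2 : ℝ) ^ (2 * (n + 1) + 2))⁻¹ := by positivity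
  calc Nd (n + 1) (P (n + 1) y)
      ≤ (1 - ((2 : ℝ) ^ (2 * (n + 1) + 2))⁻¹) * ‖P (n + 1) y‖ := hNdle n _ (hPrange _ y)
    _ ≤ 1 := by nlinarith [norm_nonneg (P (n + 1) y)]

theorem closure_convexHull_subset_closedBall
    (hleNd : ∀ d : ℕ, ∀ y ∈ Fd (d + 1),
      (1 - ((2 : ℝ) ^ (2 * (d + 1) + 1))⁻¹) * ‖y‖ ≤ Nd (d + 1) y) :
    closure (convexHull ℝ (⋃ d, subspaceBall (Fd (d + 1)) (Nd (d + 1))))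
      ⊆ Metric.closedBall 0 (8 / 7) := by
  refine closure_minimal (convexHull_min (iUnion_subset fun d y ⟨hyF, hyN⟩ => ?_)
    (convex_closedBall _ _)) Metric.isClosed_closedBall
  have h78 := seven_eighths_le_one_sub_inv_two_pow (k := 2 * (d + 1) + 1) (by omega)
  rw [mem_closedBall_zero_iff]
  nlinarith [hleNd d y hyF, norm_nonneg y]

theorem mapsTo_subspaceBall (hmono : Monotone Fd)
    (hPfix : ∀ m n : ℕ, m ≤ n → ∀ y ∈ Fd m, P n y = y)
    (hPrange : ∀ (n : ℕ) (y : Y), P n y ∈ Fd n)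
    (hNdmono : ∀ d n : ℕ, ∀ y ∈ Fd (d + 1), Nd (d + 1) (P n y) ≤ Nd (d + 1) y) (n d : ℕ) :
    MapsTo (P n) (subspaceBall (Fd (d + 1)) (Nd (d + 1)))
      (subspaceBall (Fd (d + 1)) (Nd (d + 1))) := by
  rintro z ⟨hzF, hzN⟩
  refine ⟨?_, (hNdmono d n z hzF).trans hzN⟩
  rcases le_total n (d + 1) with h | h
  · exact hmono h (hPrange n z)
  · rwa [hPfix _ _ h z hzF]

theorem Nd_le_Nd_of_lt (hmono : Monotone Fd)
    (hNdest : ∀ d : ℕ, ∀ y ∈ Fd (d + 1),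
      (1 - ((2 : ℝ) ^ (2 * (d + 1) + 1))⁻¹) * ‖y‖ ≤ Nd (d + 1) y
      ∧ Nd (d + 1) y ≤ (1 - ((2 : ℝ) ^ (2 * (d + 1) + 2))⁻¹) * ‖y‖)
    {d j : ℕ} (hdj : d < j) {y : Y} (hy : y ∈ Fd (d + 1)) :
    Nd (d + 1) y ≤ Nd (j + 1) y := by
  have hε : ((2 : ℝ) ^ (2 * (j + 1) + 1))⁻¹ ≤ ((2 : ℝ) ^ (2 * (d + 1) + 2))⁻¹ :=
    inv_pow_le_inv_pow_of_le one_le_two (by omega)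
  calc Nd (d + 1) y ≤ (1 - ((2 : ℝ) ^ (2 * (d + 1) + 2))⁻¹) * ‖y‖ := (hNdest d y hy).2
    _ ≤ (1 - ((2 : ℝ) ^ (2 * (j + 1) + 1))⁻¹) * ‖y‖ := by gcongr
    _ ≤ Nd (j + 1) y := (hNdest j y (hmono (by omega) hy)).1

theorem mapsTo_iUnion_subspaceBall (hmono : Monotone Fd)
    (hPfix : ∀ m n : ℕ, m ≤ n → ∀ y ∈ Fd m, P n y = y)
    (hPrange : ∀ (n : ℕ) (y : Y), P n y ∈ Fd n)
    (hNdest : ∀ d : ℕ, ∀ y ∈ Fd (d + 1),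
      (1 - ((2 : ℝ) ^ (2 * (d + 1) + 1))⁻¹) * ‖y‖ ≤ Nd (d + 1) y
      ∧ Nd (d + 1) y ≤ (1 - ((2 : ℝ) ^ (2 * (d + 1) + 2))⁻¹) * ‖y‖)
    (hNdmono : ∀ d n : ℕ, ∀ y ∈ Fd (d + 1), Nd (d + 1) (P n y) ≤ Nd (d + 1) y) (d : ℕ) :
    MapsTo (P (d + 1)) (⋃ j, subspaceBall (Fd (j + 1)) (Nd (j + 1)))
      (⋃ j ∈ Finset.range (d + 1), subspaceBall (Fd (j + 1)) (Nd (j + 1))) := by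
  intro z hz
  obtain ⟨j, hzj⟩ := mem_iUnion.1 hz
  rcases le_or_gt j d with hjd | hdj
  · refine mem_biUnion (Finset.mem_range.2 (Nat.lt_succ_of_le hjd)) ?_
    rwa [hPfix _ _ (by omega) z hzj.1]
  · have hPz := mapsTo_subspaceBall hmono hPfix hPrange hNdmono (d + 1) j hzj
    exact mem_biUnion (Finset.mem_range.2 d.lt_succ_self)
      ⟨hPrange _ z, (Nd_le_Nd_of_lt hmono hNdest hdj (hPrange _ z)).trans hPz.2⟩

theorem le_norm_of_unitBall_eq
    (hNdle : ∀ d : ℕ, ∀ y ∈ Fd (d + 1),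
      Nd (d + 1) y ≤ (1 - ((2 : ℝ) ^ (2 * (d + 1) + 2))⁻¹) * ‖y‖)
    (hPrange : ∀ (n : ℕ) (y : Y), P n y ∈ Fd n)
    (hPlim : ∀ y : Y, Tendsto (fun n => P n y) atTop (nhds y))
    (hPl2 : ∀ (n : ℕ) (y : Y), ‖P n y‖ ≤ ‖y‖)
    (hNFsmul : ∀ (a : ℝ) (y : Y), NF (a • y) = |a| * NF y)
    (hNFball : {y | NF y ≤ 1}
      = closure (convexHull ℝ (⋃ d, subspaceBall (Fd (d + 1)) (Nd (d + 1)))))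
    (y : Y) : NF y ≤ ‖y‖ :=
  le_of_le_one_imp_le_one hNFsmul (fun a y => by rw [norm_smul, Real.norm_eq_abs])
    norm_nonneg (fun z hz => hNFball.symm.subset <| closedBall_subset_closure_convexHull
      hNdle hPrange hPlim hPl2 (mem_closedBall_zero_iff.2 hz)) y

theorem seven_eighths_norm_le_of_unitBall_eq
    (hleNd : ∀ d : ℕ, ∀ y ∈ Fd (d + 1),
      (1 - ((2 : ℝ) ^ (2 * (d + 1) + 1))⁻¹) * ‖y‖ ≤ Nd (d + 1) y)
    (hNFsmul : ∀ (a : ℝ) (y : Y), NF (a • y) = |a| * NF y) (hNFpos : ∀ y : Y, 0 ≤ NF y)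
    (hNFball : {y | NF y ≤ 1}
      = closure (convexHull ℝ (⋃ d, subspaceBall (Fd (d + 1)) (Nd (d + 1)))))
    (y : Y) : (7 / 8 : ℝ) * ‖y‖ ≤ NF y := by
  refine le_of_le_one_imp_le_one (f := fun y => 7 / 8 * ‖y‖) (fun a y => ?_) hNFsmul hNFpos
    (fun z hz => ?_) y
  · rw [norm_smul, Real.norm_eq_abs]
    ring
  · have hz' := mem_closedBall_zero_iff.1 <|
      closure_convexHull_subset_closedBall hleNd (hNFball.subset hz)
    linarith

theorem apply_le_of_unitBall_eq (hmono : Monotone Fd)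
    (hPfix : ∀ m n : ℕ, m ≤ n → ∀ y ∈ Fd m, P n y = y)
    (hPrange : ∀ (n : ℕ) (y : Y), P n y ∈ Fd n)
    (hNdmono : ∀ d n : ℕ, ∀ y ∈ Fd (d + 1), Nd (d + 1) (P n y) ≤ Nd (d + 1) y)
    (hNFsmul : ∀ (a : ℝ) (y : Y), NF (a • y) = |a| * NF y) (hNFpos : ∀ y : Y, 0 ≤ NF y)
    (hNFball : {y | NF y ≤ 1}
      = closure (convexHull ℝ (⋃ d, subspaceBall (Fd (d + 1)) (Nd (d + 1)))))
    (n : ℕ) (y : Y) : NF (P n y) ≤ NF y := by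
  have hmaps : MapsTo (P n) (⋃ d, subspaceBall (Fd (d + 1)) (Nd (d + 1)))
      (⋃ d, subspaceBall (Fd (d + 1)) (Nd (d + 1))) :=
    fun z hz => mem_iUnion.2 <| (mem_iUnion.1 hz).imp fun d hzd =>
      mapsTo_subspaceBall hmono hPfix hPrange hNdmono n d hzd
  refine le_of_le_one_imp_le_one (f := fun y => NF (P n y)) (fun a y => ?_) hNFsmul hNFpos
    (fun z hz => ?_) y
  · rw [map_smul, hNFsmul]
  · exact hNFball.symm.subset (hmaps.closure_convexHull (P n) (hNFball.subset hz))

theorem subspaceBall_eq_convexHull_of_unitBall_eq (hmono : Monotone Fd)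
    (hPfix : ∀ m n : ℕ, m ≤ n → ∀ y ∈ Fd m, P n y = y)
    (hPrange : ∀ (n : ℕ) (y : Y), P n y ∈ Fd n)
    (hNdest : ∀ d : ℕ, ∀ y ∈ Fd (d + 1),
      (1 - ((2 : ℝ) ^ (2 * (d + 1) + 1))⁻¹) * ‖y‖ ≤ Nd (d + 1) y
      ∧ Nd (d + 1) y ≤ (1 - ((2 : ℝ) ^ (2 * (d + 1) + 2))⁻¹) * ‖y‖)
    (hNdmono : ∀ d n : ℕ, ∀ y ∈ Fd (d + 1), Nd (d + 1) (P n y) ≤ Nd (d + 1) y)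
    {G : ℕ → Finset Y} (hG : ∀ d, subspaceBall (Fd (d + 1)) (Nd (d + 1)) = convexHull ℝ (G d))
    (hNFball : {y | NF y ≤ 1}
      = closure (convexHull ℝ (⋃ d, subspaceBall (Fd (d + 1)) (Nd (d + 1)))))
    (d : ℕ) : subspaceBall (Fd (d + 1)) NF
      = convexHull ℝ (⋃ j ∈ Finset.range (d + 1), subspaceBall (Fd (j + 1)) (Nd (j + 1))) := by
  have hclosed : IsClosed
      (convexHull ℝ (⋃ j ∈ Finset.range (d + 1), subspaceBall (Fd (j + 1)) (Nd (j + 1)))) := by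
    simp_rw [hG]
    rw [convexHull_biUnion_convexHull]
    exact ((Finset.range (d + 1)).finite_toSet.biUnion fun j _ =>
      (G j).finite_toSet).isClosed_convexHull ℝ
  refine Subset.antisymm (fun y ⟨hyF, hyN⟩ => ?_) (convexHull_min (fun w hw => ?_) ?_)
  · have hPy := (mapsTo_iUnion_subspaceBall hmono hPfix hPrange hNdest hNdmono d).closure_convexHull
      (P (d + 1)) (hNFball.subset hyN)
    rwa [hPfix _ _ le_rfl y hyF, hclosed.closure_eq] at hPy
  · obtain ⟨j, hj, hwF, hwN⟩ := mem_iUnion₂.1 hw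
    refine ⟨hmono (by simpa using hj) hwF, hNFball.symm.subset ?_⟩
    exact subset_closure (subset_convexHull ℝ _ (mem_iUnion.2 ⟨j, hwF, hwN⟩))
  · have hconv : Convex ℝ {y | NF y ≤ 1} := hNFball ▸ (convex_convexHull ℝ _).closure
    exact (Fd (d + 1)).convex.inter hconv

end RationalSpace

theorem stmt15_general {Y : Type*} [NormedAddCommGroup Y] [NormedSpace ℝ Y]
    (fv : ℕ → Y)
    (Fd : ℕ → Submodule ℝ Y)
    (hFd : ∀ d : ℕ, Fd d = Submodule.span ℝ (fv '' {i | i < d}))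
    (Nd : ℕ → Y → ℝ)
    (hNdest : ∀ d : ℕ, ∀ y ∈ Fd (d + 1),
      (1 - ((2 : ℝ) ^ (2 * (d + 1) + 1))⁻¹) * ‖y‖ ≤ Nd (d + 1) y
      ∧ Nd (d + 1) y ≤ (1 - ((2 : ℝ) ^ (2 * (d + 1) + 2))⁻¹) * ‖y‖)
    (P : ℕ → Y →L[ℝ] Y)
    (hPf : ∀ n i : ℕ, P n (fv i) = if i < n then fv i else 0)
    (hPrange : ∀ (n : ℕ) (y : Y), P n y ∈ Fd n)
    (hPlim : ∀ y : Y, Filter.Tendsto (fun n => P n y) Filter.atTop (nhds y))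
    (hPl2 : ∀ (n : ℕ) (y : Y), ‖P n y‖ ≤ ‖y‖)
    (hNdmono : ∀ d n : ℕ, ∀ y ∈ Fd (d + 1), Nd (d + 1) (P n y) ≤ Nd (d + 1) y)
    (hNdrat : ∀ d : ℕ, ∃ G : Finset Y,
      ({y : Y | y ∈ Fd (d + 1) ∧ Nd (d + 1) y ≤ 1} = convexHull ℝ ↑G)
      ∧ ∀ g ∈ G, ∃ q : ℕ → ℚ, g = ∑ i ∈ Finset.range (d + 1), (q i : ℝ) • fv i)
    (NF : Y → ℝ)
    (hNFsmul : ∀ (a : ℝ) (y : Y), NF (a • y) = |a| * NF y)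
    (hNFpos : ∀ y : Y, 0 ≤ NF y)
    (hNFball : {y : Y | NF y ≤ 1}
      = closure (convexHull ℝ (⋃ d : ℕ, {y : Y | y ∈ Fd (d + 1) ∧ Nd (d + 1) y ≤ 1}))) :
    (∀ y : Y, (7 / 8 : ℝ) * ‖y‖ ≤ NF y ∧ NF y ≤ ‖y‖)
    ∧ (∀ (n : ℕ) (y : Y), NF (P n y) ≤ NF y)
    ∧ (∀ d : ℕ, {y : Y | y ∈ Fd (d + 1) ∧ NF y ≤ 1}
        = convexHull ℝ (⋃ j ∈ Finset.range (d + 1), {y : Y | y ∈ Fd (j + 1) ∧ Nd (j + 1) y ≤ 1}))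
    ∧ (∀ d : ℕ, ∃ G : Finset Y,
        ({y : Y | y ∈ Fd (d + 1) ∧ NF y ≤ 1} = convexHull ℝ ↑G)
        ∧ ∀ g ∈ G, ∃ q : ℕ → ℚ, g = ∑ i ∈ Finset.range (d + 1), (q i : ℝ) • fv i) := by
  have hmono : Monotone Fd := by
    simpa only [← funext hFd] using monotone_span_image_lt (R := ℝ) fv
  have hPfix : ∀ m n : ℕ, m ≤ n → ∀ y ∈ Fd m, P n y = y := fun m n h y hy =>
    apply_eq_self_of_mem_span (L := (P n : Y →ₗ[ℝ] Y)) (hPf n) h (hFd m ▸ hy)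
  choose G hG hGrat using hNdrat
  have hball := subspaceBall_eq_convexHull_of_unitBall_eq hmono hPfix hPrange hNdest hNdmono hG
    hNFball
  refine ⟨fun y => ⟨?_, ?_⟩, apply_le_of_unitBall_eq hmono hPfix hPrange hNdmono hNFsmul hNFpos
    hNFball, hball, fun d => ?_⟩
  · exact seven_eighths_norm_le_of_unitBall_eq (fun d y hy => (hNdest d y hy).1) hNFsmul hNFpos
      hNFball y
  · exact le_norm_of_unitBall_eq (fun d y hy => (hNdest d y hy).2) hPrange hPlim hPl2 hNFsmul
      hNFball y
  · exact (exists_rat_finset_convexHull_biUnion_range_eq hG hGrat d).imp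
      fun G' hG' => ⟨(hball d).trans hG'.1, hG'.2⟩

/-- Lemma 6.5: for the space `(F, ‖·‖)` of Definition 6.3 — here `Y` stands for `ℓ²(X)`
with its canonical norm `‖·‖`, `fv i = f_{i+1}` is its basis, `Fd d = span{f₁,…,f_d}`,
`Nd d = |·|_d` are the chosen monotone rational norms with
`(1−2^{-(2d+1)})‖f‖ ≤ |f|_d ≤ (1−2^{-(2d+2)})‖f‖` on `F_d`, and `NF` is the norm whose
unit ball is the closed convex hull of the balls `B_{(F_d,|·|_d)}` — one has
`(7/8)‖f‖_{ℓ²(X)} ≤ NF f ≤ ‖f‖_{ℓ²(X)}`, the basis is monotone for `NF`, the `NF`-unit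
ball of `F_d` equals the convex hull of the balls of `(F_j,|·|_j)`, `j ≤ d`, and in
particular `(F_d, NF)` is a rational space. -/
theorem stmt15 {Y : Type*} [NormedAddCommGroup Y] [NormedSpace ℝ Y] [CompleteSpace Y]
    (fv : ℕ → Y)
    (Fd : ℕ → Submodule ℝ Y)
    (hFd : ∀ d : ℕ, Fd d = Submodule.span ℝ (fv '' {i | i < d}))
    (Nd : ℕ → Y → ℝ)
    (hNdnorm : ∀ d : ℕ, (∀ y z : Y, Nd d (y + z) ≤ Nd d y + Nd d z)
      ∧ (∀ (a : ℝ) (y : Y), Nd d (a • y) = |a| * Nd d y) ∧ (∀ y : Y, 0 ≤ Nd d y))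
    (hNdest : ∀ d : ℕ, ∀ y ∈ Fd (d + 1),
      (1 - ((2 : ℝ) ^ (2 * (d + 1) + 1))⁻¹) * ‖y‖ ≤ Nd (d + 1) y
      ∧ Nd (d + 1) y ≤ (1 - ((2 : ℝ) ^ (2 * (d + 1) + 2))⁻¹) * ‖y‖)
    (P : ℕ → Y →L[ℝ] Y)
    (hPf : ∀ n i : ℕ, P n (fv i) = if i < n then fv i else 0)
    (hPrange : ∀ (n : ℕ) (y : Y), P n y ∈ Fd n)
    (hPlim : ∀ y : Y, Filter.Tendsto (fun n => P n y) Filter.atTop (nhds y))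
    (hPl2 : ∀ (n : ℕ) (y : Y), ‖P n y‖ ≤ ‖y‖)
    (hNdmono : ∀ d n : ℕ, ∀ y ∈ Fd (d + 1), Nd (d + 1) (P n y) ≤ Nd (d + 1) y)
    (hNdrat : ∀ d : ℕ, ∃ G : Finset Y,
      ({y : Y | y ∈ Fd (d + 1) ∧ Nd (d + 1) y ≤ 1} = convexHull ℝ ↑G)
      ∧ ∀ g ∈ G, ∃ q : ℕ → ℚ, g = ∑ i ∈ Finset.range (d + 1), (q i : ℝ) • fv i)
    (NF : Y → ℝ)
    (hNFadd : ∀ y z : Y, NF (y + z) ≤ NF y + NF z)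
    (hNFsmul : ∀ (a : ℝ) (y : Y), NF (a • y) = |a| * NF y)
    (hNFpos : ∀ y : Y, 0 ≤ NF y)
    (hNFball : {y : Y | NF y ≤ 1}
      = closure (convexHull ℝ (⋃ d : ℕ, {y : Y | y ∈ Fd (d + 1) ∧ Nd (d + 1) y ≤ 1}))) :
    (∀ y : Y, (7 / 8 : ℝ) * ‖y‖ ≤ NF y ∧ NF y ≤ ‖y‖)
    ∧ (∀ (n : ℕ) (y : Y), NF (P n y) ≤ NF y)
    ∧ (∀ d : ℕ, {y : Y | y ∈ Fd (d + 1) ∧ NF y ≤ 1}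
        = convexHull ℝ (⋃ j ∈ Finset.range (d + 1), {y : Y | y ∈ Fd (j + 1) ∧ Nd (j + 1) y ≤ 1}))
    ∧ (∀ d : ℕ, ∃ G : Finset Y,
        ({y : Y | y ∈ Fd (d + 1) ∧ NF y ≤ 1} = convexHull ℝ ↑G)
        ∧ ∀ g ∈ G, ∃ q : ℕ → ℚ, g = ∑ i ∈ Finset.range (d + 1), (q i : ℝ) • fv i) :=
  stmt15_general fv Fd hFd Nd hNdest P hPf hPrange hPlim hPl2 hNdmono hNdrat NF hNFsmul hNFpos
    hNFball
end

section
/- In the space (F, ‖·‖) of Definition 6.3, the partial sum projections satisfy ‖f‖ ≥ ‖P_n f‖ + 2^{-(2n+4)}‖f − P_n f‖ for every f ∈ F and every n ∈ ℕ. -/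
/-!
Put `ε = 2^{-(2n+4)}`. The function `Φ f = ‖P_n f‖ + ε ‖f - P_n f‖` is a continuous seminorm
(`‖·‖` is dominated by the `ℓ²` norm because the unit ball of `ℓ²` lies in the closure of
`⋃_d B_{(F_d, |·|_d)}`, through the partial sums). Hence `Φ ≤ ‖·‖` as soon as `Φ ≤ 1` on every
ball `B_{(F_d, |·|_d)}`. For `d ≤ n` we have `P_n f = f` and `‖f‖ ≤ |f|_d`. For `d > n`,
`‖P_n f‖ ≤ |P_n f|_n ≤ (1 - 2^{-(2n+2)}) ‖f‖_{ℓ²}` and `ε ‖f - P_n f‖ ≤ 2ε ‖f‖_{ℓ²}`, so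
`Φ f ≤ (1 - 2^{-(2n+3)}) ‖f‖_{ℓ²} ≤ (1 - 2^{-(2d+1)}) ‖f‖_{ℓ²} ≤ |f|_d`.
-/

namespace Seminorm

variable {E : Type*} [AddCommGroup E] [Module ℝ E]

theorem le_of_forall_smul_le_one {p q : Seminorm ℝ E} {x : E}
    (h : ∀ t : ℝ, 0 < t → p (t • x) ≤ 1 → q (t • x) ≤ 1) : q x ≤ p x := by
  refine le_of_forall_pos_le_add fun ε hε => ?_
  have hc : 0 < p x + ε := by linarith [apply_nonneg p x]
  have hscale : ∀ r : Seminorm ℝ E, r ((p x + ε)⁻¹ • x) ≤ 1 ↔ r x ≤ p x + ε := fun r => by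
    rw [map_smul_eq_mul, Real.norm_eq_abs, abs_of_pos (inv_pos.2 hc), inv_mul_le_one₀ hc]
  exact (hscale q).1 (h _ (inv_pos.2 hc) ((hscale p).2 (by linarith)))

theorem closure_convexHull_subset_closedBall [TopologicalSpace E] {p : Seminorm ℝ E}
    (hp : Continuous p) {s : Set E} (hs : s ⊆ p.closedBall 0 1) :
    closure (convexHull ℝ s) ⊆ p.closedBall 0 1 := by
  refine closure_minimal (convexHull_min hs (p.convex_closedBall 0 1)) ?_
  rw [closedBall_zero_eq]
  exact isClosed_le hp continuous_const

end Seminorm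

theorem one_sub_two_pow_inv_add_le {m e : ℕ} (h : m < e) :
    (1 - ((2 : ℝ) ^ (2 * m + 2))⁻¹) + ((2 : ℝ) ^ (2 * m + 4))⁻¹ * 2
      ≤ 1 - ((2 : ℝ) ^ (2 * e + 1))⁻¹ := by
  have hx : (0 : ℝ) < 2 ^ (2 * m + 2) := by positivity
  have hle : ((2 : ℝ) ^ (2 * e + 1))⁻¹ ≤ ((2 : ℝ) ^ (2 * m + 3))⁻¹ :=
    inv_anti₀ (by positivity) (pow_le_pow_right₀ (by norm_num) (by omega))
  have h3 : (2 : ℝ) ^ (2 * m + 3) = 2 * 2 ^ (2 * m + 2) := by ring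
  have h4 : (2 : ℝ) ^ (2 * m + 4) = 4 * 2 ^ (2 * m + 2) := by ring
  rw [h3] at hle
  rw [h4]
  field_simp at hle ⊢
  linarith

section PartialSumProjections

open Filter Topology

variable {Y : Type*} [NormedAddCommGroup Y] [NormedSpace ℝ Y]

def unionBalls (F : ℕ → Submodule ℝ Y) (Nd : ℕ → Seminorm ℝ Y) : Set Y :=
  ⋃ d, {y | y ∈ F (d + 1) ∧ Nd (d + 1) y ≤ 1}

variable {F : ℕ → Submodule ℝ Y} {N : Seminorm ℝ Y} {Nd : ℕ → Seminorm ℝ Y}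

theorem le_seminorm_of_mem (hN : N.closedBall 0 1 = closure (convexHull ℝ (unionBalls F Nd)))
    {d : ℕ} {f : Y} (hf : f ∈ F (d + 1)) : N f ≤ Nd (d + 1) f := by
  refine Seminorm.le_of_forall_smul_le_one fun t _ ht => ?_
  have hmem : t • f ∈ unionBalls F Nd := Set.mem_iUnion.2 ⟨d, (F (d + 1)).smul_mem t hf, ht⟩
  rw [← Seminorm.mem_closedBall_zero, hN]
  exact subset_closure (subset_convexHull ℝ _ hmem)

theorem le_norm_of_tendsto (hN : N.closedBall 0 1 = closure (convexHull ℝ (unionBalls F Nd)))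
    (hF : Monotone F) (hNd : ∀ d, ∀ y ∈ F (d + 1), Nd (d + 1) y ≤ ‖y‖) {P : ℕ → Y →L[ℝ] Y}
    (hPF : ∀ n y, P n y ∈ F n) (hPnorm : ∀ n y, ‖P n y‖ ≤ ‖y‖)
    (hPlim : ∀ y, Tendsto (fun n => P n y) atTop (𝓝 y)) (y : Y) : N y ≤ ‖y‖ := by
  refine Seminorm.le_of_forall_smul_le_one (p := normSeminorm ℝ Y) fun t _ ht => ?_
  rw [coe_normSeminorm] at ht
  rw [← Seminorm.mem_closedBall_zero, hN]
  refine mem_closure_of_tendsto (hPlim _) (Eventually.of_forall fun m => ?_)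
  have hm : P m (t • y) ∈ F (m + 1) := hF m.le_succ (hPF m _)
  exact subset_convexHull ℝ _ <| Set.mem_iUnion.2
    ⟨m, hm, ((hNd m _ hm).trans (hPnorm m _)).trans ht⟩

theorem add_inv_two_pow_mul_le_of_mem
    (hN : N.closedBall 0 1 = closure (convexHull ℝ (unionBalls F Nd)))
    (hF : Monotone F)
    (hNd : ∀ d, ∀ y ∈ F (d + 1), (1 - ((2 : ℝ) ^ (2 * (d + 1) + 1))⁻¹) * ‖y‖ ≤ Nd (d + 1) y
      ∧ Nd (d + 1) y ≤ (1 - ((2 : ℝ) ^ (2 * (d + 1) + 2))⁻¹) * ‖y‖)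
    (hNnorm : ∀ y, N y ≤ ‖y‖) {P : ℕ → Y →L[ℝ] Y} (hPF : ∀ n y, P n y ∈ F n)
    (hPid : ∀ n, ∀ y ∈ F n, P n y = y) (hPnorm : ∀ n y, ‖P n y‖ ≤ ‖y‖)
    {n d : ℕ} (hn : 1 ≤ n) {f : Y} (hf : f ∈ F (d + 1)) :
    N (P n f) + ((2 : ℝ) ^ (2 * n + 4))⁻¹ * N (f - P n f) ≤ Nd (d + 1) f := by
  rcases le_or_gt (d + 1) n with hdn | hnd
  · rw [hPid n f (hF hdn hf), sub_self, map_zero, mul_zero, add_zero]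
    exact le_seminorm_of_mem hN hf
  obtain ⟨k, rfl⟩ : ∃ k, n = k + 1 := ⟨n - 1, by omega⟩
  have hPf := hPF (k + 1) f
  have hcoeff : 0 ≤ 1 - ((2 : ℝ) ^ (2 * (k + 1) + 2))⁻¹ :=
    sub_nonneg.2 (inv_le_one_of_one_le₀ (one_le_pow₀ (by norm_num)))
  have hrange : N (P (k + 1) f) ≤ (1 - ((2 : ℝ) ^ (2 * (k + 1) + 2))⁻¹) * ‖f‖ :=
    calc N (P (k + 1) f) ≤ Nd (k + 1) (P (k + 1) f) := le_seminorm_of_mem hN hPf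
      _ ≤ (1 - ((2 : ℝ) ^ (2 * (k + 1) + 2))⁻¹) * ‖P (k + 1) f‖ := (hNd k _ hPf).2
      _ ≤ _ := mul_le_mul_of_nonneg_left (hPnorm _ f) hcoeff
  have htail : N (f - P (k + 1) f) ≤ ‖f‖ * 2 :=
    calc N (f - P (k + 1) f) ≤ ‖f - P (k + 1) f‖ := hNnorm _
      _ ≤ ‖f‖ + ‖P (k + 1) f‖ := norm_sub_le _ _
      _ ≤ ‖f‖ * 2 := by linarith [hPnorm (k + 1) f]
  calc N (P (k + 1) f) + ((2 : ℝ) ^ (2 * (k + 1) + 4))⁻¹ * N (f - P (k + 1) f)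
      ≤ (1 - ((2 : ℝ) ^ (2 * (k + 1) + 2))⁻¹) * ‖f‖
        + ((2 : ℝ) ^ (2 * (k + 1) + 4))⁻¹ * (‖f‖ * 2) := by gcongr
    _ = ((1 - ((2 : ℝ) ^ (2 * (k + 1) + 2))⁻¹) + ((2 : ℝ) ^ (2 * (k + 1) + 4))⁻¹ * 2) * ‖f‖ := by
        ring
    _ ≤ (1 - ((2 : ℝ) ^ (2 * (d + 1) + 1))⁻¹) * ‖f‖ := by
        gcongr
        exact one_sub_two_pow_inv_add_le (by omega)
    _ ≤ Nd (d + 1) f := (hNd d f hf).1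

open NNReal in
theorem add_inv_two_pow_mul_le
    (hN : N.closedBall 0 1 = closure (convexHull ℝ (unionBalls F Nd)))
    (hF : Monotone F)
    (hNd : ∀ d, ∀ y ∈ F (d + 1), (1 - ((2 : ℝ) ^ (2 * (d + 1) + 1))⁻¹) * ‖y‖ ≤ Nd (d + 1) y
      ∧ Nd (d + 1) y ≤ (1 - ((2 : ℝ) ^ (2 * (d + 1) + 2))⁻¹) * ‖y‖)
    {P : ℕ → Y →L[ℝ] Y} (hPF : ∀ n y, P n y ∈ F n) (hPid : ∀ n, ∀ y ∈ F n, P n y = y)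
    (hPnorm : ∀ n y, ‖P n y‖ ≤ ‖y‖) (hPlim : ∀ y, Tendsto (fun n => P n y) atTop (𝓝 y))
    {n : ℕ} (hn : 1 ≤ n) (y : Y) :
    N (P n y) + ((2 : ℝ) ^ (2 * n + 4))⁻¹ * N (y - P n y) ≤ N y := by
  have hNd_le_norm : ∀ d, ∀ y ∈ F (d + 1), Nd (d + 1) y ≤ ‖y‖ := fun d y hy =>
    (hNd d y hy).2.trans (mul_le_of_le_one_left (norm_nonneg y)
      (sub_le_self _ (inv_nonneg.2 (by positivity))))
  have hNnorm := le_norm_of_tendsto hN hF hNd_le_norm hPF hPnorm hPlim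
  have hNcont : Continuous N := Seminorm.continuous_of_le (q := normSeminorm ℝ Y) continuous_norm
    (Seminorm.le_def.2 hNnorm)
  let Φ : Seminorm ℝ Y := N.comp (P n).toLinearMap
    + ((2 : ℝ≥0) ^ (2 * n + 4))⁻¹ • N.comp (LinearMap.id - (P n).toLinearMap)
  have hΦ : ∀ z, Φ z = N (P n z) + ((2 : ℝ) ^ (2 * n + 4))⁻¹ * N (z - P n z) := fun z => by
    simp [Φ, NNReal.smul_def]
  have hΦcont : Continuous Φ := by
    simp only [funext hΦ]
    fun_prop
  have hballs : unionBalls F Nd ⊆ Φ.closedBall 0 1 := fun f hf => by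
    obtain ⟨d, hfd, hf1⟩ := Set.mem_iUnion.1 hf
    rw [Seminorm.mem_closedBall_zero, hΦ]
    exact (add_inv_two_pow_mul_le_of_mem hN hF hNd hNnorm hPF hPid hPnorm hn hfd).trans hf1
  rw [← hΦ]
  refine Seminorm.le_of_forall_smul_le_one fun t _ ht => ?_
  rw [← Seminorm.mem_closedBall_zero, hN] at ht
  exact (Φ.mem_closedBall_zero).1 (Seminorm.closure_convexHull_subset_closedBall hΦcont hballs ht)

end PartialSumProjections

/-- `Y` stands for `ℓ²(X)`, `fv i = f_{i+1}`, `Fd d = F_d`, `Nd d = |·|_d`, and `NF` is the norm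
`‖·‖` of `F`. -/
theorem stmt16_general {Y : Type*} [NormedAddCommGroup Y] [NormedSpace ℝ Y]
    (fv : ℕ → Y)
    (Fd : ℕ → Submodule ℝ Y)
    (hFd : ∀ d : ℕ, Fd d = Submodule.span ℝ (fv '' {i | i < d}))
    (Nd : ℕ → Y → ℝ)
    (hNdnorm : ∀ d : ℕ, (∀ y z : Y, Nd d (y + z) ≤ Nd d y + Nd d z)
      ∧ (∀ (a : ℝ) (y : Y), Nd d (a • y) = |a| * Nd d y) ∧ (∀ y : Y, 0 ≤ Nd d y))
    (hNdest : ∀ d : ℕ, ∀ y ∈ Fd (d + 1),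
      (1 - ((2 : ℝ) ^ (2 * (d + 1) + 1))⁻¹) * ‖y‖ ≤ Nd (d + 1) y
      ∧ Nd (d + 1) y ≤ (1 - ((2 : ℝ) ^ (2 * (d + 1) + 2))⁻¹) * ‖y‖)
    (P : ℕ → Y →L[ℝ] Y)
    (hPf : ∀ n i : ℕ, P n (fv i) = if i < n then fv i else 0)
    (hPrange : ∀ (n : ℕ) (y : Y), P n y ∈ Fd n)
    (hPlim : ∀ y : Y, Filter.Tendsto (fun n => P n y) Filter.atTop (nhds y))
    (hPl2 : ∀ (n : ℕ) (y : Y), ‖P n y‖ ≤ ‖y‖)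
    (NF : Y → ℝ)
    (hNFadd : ∀ y z : Y, NF (y + z) ≤ NF y + NF z)
    (hNFsmul : ∀ (a : ℝ) (y : Y), NF (a • y) = |a| * NF y)
    (hNFball : {y : Y | NF y ≤ 1}
      = closure (convexHull ℝ (⋃ d : ℕ, {y : Y | y ∈ Fd (d + 1) ∧ Nd (d + 1) y ≤ 1}))) :
    ∀ n : ℕ, 1 ≤ n → ∀ y : Y,
      NF (P n y) + ((2 : ℝ) ^ (2 * n + 4))⁻¹ * NF (y - P n y) ≤ NF y := by
  intro n hn y
  let N : Seminorm ℝ Y := Seminorm.of NF hNFadd (by simpa only [Real.norm_eq_abs] using hNFsmul)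
  let Nd' (d : ℕ) : Seminorm ℝ Y :=
    Seminorm.of (Nd d) (hNdnorm d).1 (by simpa only [Real.norm_eq_abs] using (hNdnorm d).2.1)
  have hN : N.closedBall 0 1 = closure (convexHull ℝ (unionBalls Fd Nd')) := by
    rw [Seminorm.closedBall_zero_eq]
    exact hNFball
  have hF : Monotone Fd := fun a b hab => by
    rw [hFd a, hFd b]
    exact Submodule.span_mono (Set.image_mono fun i hi => lt_of_lt_of_le hi hab)
  have hPid : ∀ n, ∀ y ∈ Fd n, P n y = y := fun n y hy => by
    rw [hFd n] at hy
    refine LinearMap.eqOn_span' (f := (P n).toLinearMap) (g := LinearMap.id) ?_ hy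
    rintro _ ⟨i, hi, rfl⟩
    simp [hPf, show i < n from hi]
  exact add_inv_two_pow_mul_le hN hF hNdest hPrange hPid hPl2 hPlim hn y

/-- Lemma 6.7: in the space `(F, NF)` of Definition 6.3 — here `Y` stands for `ℓ²(X)`
with its canonical norm `‖·‖`, `fv i = f_{i+1}` its basis, `Fd d = span{f₁,…,f_d}`,
`Nd d = |·|_d` the chosen monotone rational norms, `P n` the partial-sum projections, and
`NF` the norm whose unit ball is the closed convex hull of the balls `B_{(F_d,|·|_d)}` —
the partial-sum projections satisfy
`NF f ≥ NF (P_n f) + 2^{-(2n+4)}·NF (f − P_n f)` for every `f` and every `n ≥ 1`. -/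
theorem stmt16 {Y : Type*} [NormedAddCommGroup Y] [NormedSpace ℝ Y] [CompleteSpace Y]
    (fv : ℕ → Y)
    (Fd : ℕ → Submodule ℝ Y)
    (hFd : ∀ d : ℕ, Fd d = Submodule.span ℝ (fv '' {i | i < d}))
    (Nd : ℕ → Y → ℝ)
    (hNdnorm : ∀ d : ℕ, (∀ y z : Y, Nd d (y + z) ≤ Nd d y + Nd d z)
      ∧ (∀ (a : ℝ) (y : Y), Nd d (a • y) = |a| * Nd d y) ∧ (∀ y : Y, 0 ≤ Nd d y))
    (hNdest : ∀ d : ℕ, ∀ y ∈ Fd (d + 1),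
      (1 - ((2 : ℝ) ^ (2 * (d + 1) + 1))⁻¹) * ‖y‖ ≤ Nd (d + 1) y
      ∧ Nd (d + 1) y ≤ (1 - ((2 : ℝ) ^ (2 * (d + 1) + 2))⁻¹) * ‖y‖)
    (P : ℕ → Y →L[ℝ] Y)
    (hPf : ∀ n i : ℕ, P n (fv i) = if i < n then fv i else 0)
    (hPrange : ∀ (n : ℕ) (y : Y), P n y ∈ Fd n)
    (hPlim : ∀ y : Y, Filter.Tendsto (fun n => P n y) Filter.atTop (nhds y))
    (hPl2 : ∀ (n : ℕ) (y : Y), ‖P n y‖ ≤ ‖y‖)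
    (hNdmono : ∀ d n : ℕ, ∀ y ∈ Fd (d + 1), Nd (d + 1) (P n y) ≤ Nd (d + 1) y)
    (hNdrat : ∀ d : ℕ, ∃ G : Finset Y,
      ({y : Y | y ∈ Fd (d + 1) ∧ Nd (d + 1) y ≤ 1} = convexHull ℝ ↑G)
      ∧ ∀ g ∈ G, ∃ q : ℕ → ℚ, g = ∑ i ∈ Finset.range (d + 1), (q i : ℝ) • fv i)
    (NF : Y → ℝ)
    (hNFadd : ∀ y z : Y, NF (y + z) ≤ NF y + NF z)
    (hNFsmul : ∀ (a : ℝ) (y : Y), NF (a • y) = |a| * NF y)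
    (hNFpos : ∀ y : Y, 0 ≤ NF y)
    (hNFball : {y : Y | NF y ≤ 1}
      = closure (convexHull ℝ (⋃ d : ℕ, {y : Y | y ∈ Fd (d + 1) ∧ Nd (d + 1) y ≤ 1}))) :
    ∀ n : ℕ, 1 ≤ n → ∀ y : Y,
      NF (P n y) + ((2 : ℝ) ^ (2 * n + 4))⁻¹ * NF (y - P n y) ≤ NF y :=
  stmt16_general fv Fd hFd Nd hNdnorm hNdest P hPf hPrange hPlim hPl2 NF hNFadd hNFsmul hNFball
end

section
/- Define on the space F of Definition 6.3 the seminorm β(f)² = ∑_{n,k} 2^{-4π^{-1}(n+1,k)} |e*_{(n,k)}(f) − 2e*_{(n+1,k)}(f)|², where e*_{(n,k)} are the coordinate functionals of ℓ²(X). Then for every d ≥ 0 and every f in the closed span of {f_{d+1}, f_{d+2}, …}, one has β(f) ≤ 2·2^{-2d}‖f‖; in particular β(f) ≤ 2‖f‖ for all f ∈ F. -/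
/-!
Each summand of `β(f)²` is at most `2^{-4π^{-1}(n+1,k)}·(3·(16/7)‖f‖)²`, and for `f` in the closed
span of `{f_{d+1}, f_{d+2}, …}` it vanishes unless `π^{-1}(n+1,k) > d`, since the coordinate
functionals `e*_{π(i)}` with `i ≤ d` vanish on that span. As `(n,k) ↦ π^{-1}(n+1,k)` is injective,
the sum is dominated by a geometric tail `∑_{m > d} 16^{-m}`, which gives `β(f)² ≤ 4·16^{-d}‖f‖²`.
-/

open Function

theorem tsum_le_of_le_geometric_tail {α : Type*} {g : α → ℝ} {e : α → ℕ} (he : Injective e)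
    {C r : ℝ} (hC : 0 ≤ C) (hr0 : 0 ≤ r) (hr1 : r < 1) {d : ℕ} (hg0 : ∀ a, 0 ≤ g a)
    (hg : ∀ a, g a ≤ if d ≤ e a then C * r ^ e a else 0) :
    ∑' a, g a ≤ C * r ^ d * (1 - r)⁻¹ := by
  set H : ℕ → ℝ := fun m => if d ≤ m then C * r ^ m else 0
  have hH0 : ∀ m, 0 ≤ H m := fun m => by
    simp only [H]
    split_ifs <;> positivity
  have hH : HasSum H (C * r ^ d * (1 - r)⁻¹) := by
    have hhead : ∑ i ∈ Finset.range d, H i = 0 :=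
      Finset.sum_eq_zero fun i hi => if_neg (by simpa using hi)
    have hshift : (fun n => H (n + d)) = fun n => C * r ^ d * r ^ n := funext fun n => by
      simp only [H, if_pos (Nat.le_add_left d n), pow_add]
      ring
    rw [← hasSum_nat_add_iff' d, hhead, sub_zero, hshift]
    exact (hasSum_geometric_of_lt_one hr0 hr1).mul_left (C * r ^ d)
  have hgs : Summable g := (hH.summable.comp_injective he).of_nonneg_of_le hg0 hg
  exact hH.tsum_eq ▸ hgs.tsum_le_tsum_of_inj e he (fun m _ => hH0 m) hg hH.summable

theorem abs_sub_two_mul_le {a b M : ℝ} (ha : |a| ≤ M) (hb : |b| ≤ M) : |a - 2 * b| ≤ 3 * M := by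
  calc |a - 2 * b| ≤ |a| + |2 * b| := abs_sub _ _
    _ = |a| + 2 * |b| := by rw [abs_mul, abs_two]
    _ ≤ 3 * M := by linarith

theorem ContinuousLinearMap.eq_zero_of_mem_closure_span {𝕜 E F : Type*} [Semiring 𝕜]
    [AddCommMonoid E] [Module 𝕜 E] [TopologicalSpace E] [AddCommMonoid F] [Module 𝕜 F]
    [TopologicalSpace F] [T1Space F] (φ : E →L[𝕜] F) {s : Set E} (hs : ∀ x ∈ s, φ x = 0)
    {y : E} (hy : y ∈ closure (Submodule.span 𝕜 s : Set E)) : φ y = 0 :=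
  closure_minimal (Submodule.span_le.2 hs : _ ≤ LinearMap.ker (φ : E →ₗ[𝕜] F)) φ.isClosed_ker hy

section ShiftedDifferences

variable (ι : ℕ ≃ ℕ × ℕ)

theorem Equiv.injective_symm_succ_fst : Injective fun p : ℕ × ℕ => ι.symm (p.1 + 1, p.2) :=
  fun p q h => by
    obtain ⟨h1, h2⟩ := Prod.ext_iff.1 (ι.symm.injective h)
    exact Prod.ext (Nat.succ_injective h1) h2

/-- With `r = 1/16`: the summand at `p` is at most `(3M)² r^{m+1}` where `m = ι.symm (p.1+1, p.2)`,
so the geometric tail from `d` gives `(3M)²·r^{d+1}/(1-r) = (3/5) M² r^d`. -/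
theorem tsum_weighted_shift_diff_sq_le (hι : ∀ p : ℕ × ℕ, ι.symm p < ι.symm (p.1 + 1, p.2))
    (c : ℕ × ℕ → ℝ) {M : ℝ} (hc : ∀ p, |c p| ≤ M) {d : ℕ} (hcd : ∀ p, ι.symm p < d → c p = 0) :
    ∑' p : ℕ × ℕ, ((2 : ℝ) ^ (4 * (ι.symm (p.1 + 1, p.2) + 1)))⁻¹
        * (c p - 2 * c (p.1 + 1, p.2)) ^ 2 ≤ 3 / 5 * M ^ 2 * ((16 : ℝ) ^ d)⁻¹ := by
  have hweight : ∀ n : ℕ, ((2 : ℝ) ^ (4 * (n + 1)))⁻¹ = 16⁻¹ * 16⁻¹ ^ n := fun n => by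
    rw [pow_mul, ← inv_pow, pow_succ']
    norm_num
  have hterm : ∀ p : ℕ × ℕ, (c p - 2 * c (p.1 + 1, p.2)) ^ 2 ≤ (3 * M) ^ 2 :=
    fun p => sq_le_sq.2 ((abs_sub_two_mul_le (hc p) (hc _)).trans (le_abs_self _))
  have hM : 0 ≤ M := (abs_nonneg _).trans (hc (0, 0))
  refine (tsum_le_of_le_geometric_tail ι.injective_symm_succ_fst (C := 16⁻¹ * (3 * M) ^ 2)
    (r := 16⁻¹) (d := d) (by positivity) (by norm_num) (by norm_num) (fun p => by positivity)
    fun p => ?_).trans_eq ?_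
  · split_ifs with hd
    · rw [hweight, mul_right_comm]
      gcongr 16⁻¹ * ?_ * _
      exact hterm p
    · rw [not_le] at hd
      simp [hcd p ((hι p).trans hd), hcd _ hd]
  · rw [inv_pow]
    ring

end ShiftedDifferences

theorem stmt17_general {Y : Type*} [NormedAddCommGroup Y] [NormedSpace ℝ Y]
    (ι : ℕ ≃ ℕ × ℕ)
    (hι : ∀ p : ℕ × ℕ, ι.symm p < ι.symm (p.1 + 1, p.2))
    (fv : ℕ → Y) (estar : ℕ × ℕ → Y →L[ℝ] ℝ)
    (hbiorth : ∀ (i : ℕ) (p : ℕ × ℕ), estar p (fv i) = if p = ι i then (1 : ℝ) else 0)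
    (hbd : ∀ (p : ℕ × ℕ) (y : Y), |estar p y| ≤ 2 * (8 / 7) * ‖y‖)
    (β : Y → ℝ)
    (hβ : ∀ y : Y, β y = Real.sqrt (∑' p : ℕ × ℕ,
      ((2 : ℝ) ^ (4 * (ι.symm (p.1 + 1, p.2) + 1)))⁻¹
        * (estar p y - 2 * estar (p.1 + 1, p.2) y) ^ 2)) :
    (∀ d : ℕ, ∀ y ∈ closure ((Submodule.span ℝ (fv '' {i | d ≤ i}) : Submodule ℝ Y) : Set Y),
      β y ≤ 2 * ((2 : ℝ) ^ (2 * d))⁻¹ * ‖y‖)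
    ∧ ∀ y : Y, β y ≤ 2 * ‖y‖ := by
  have hβle : ∀ (d : ℕ) (y : Y), (∀ p, ι.symm p < d → estar p y = 0) →
      β y ≤ 2 * ((2 : ℝ) ^ (2 * d))⁻¹ * ‖y‖ := fun d y hy => by
    rw [hβ, Real.sqrt_le_left (by positivity)]
    refine (tsum_weighted_shift_diff_sq_le ι hι (estar · y) (hbd · y) hy).trans ?_
    have h16 : ((16 : ℝ) ^ d)⁻¹ = (((2 : ℝ) ^ (2 * d))⁻¹) ^ 2 := by
      rw [inv_pow, ← pow_mul, show 2 * d * 2 = 4 * d by ring, pow_mul]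
      norm_num
    rw [h16]
    nlinarith [sq_nonneg (((2 : ℝ) ^ (2 * d))⁻¹ * ‖y‖)]
  refine ⟨fun d y hy => hβle d y fun p hp => ?_, fun y => by simpa using hβle 0 y (by simp)⟩
  refine (estar p).eq_zero_of_mem_closure_span ?_ hy
  rintro _ ⟨i, hi, rfl⟩
  rw [hbiorth, if_neg]
  rintro rfl
  exact absurd hi (by simpa using hp)

/-- Lemma 7.2: on the space `F` of Definition 6.3 (here `Y`, with its norm standing for
the norm `‖·‖` of `F`), with the diagonal enumeration `π(i) = ι (i−1)` of `ℕ²` (so that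
`π^{-1}(n,k) = ι.symm (n,k) + 1`, and `π^{-1}(n,k) < π^{-1}(n+1,k)`), the basis
`f_i = fv (i−1)`, the coordinate functionals `e*_{(n,k)} = estar (n,k)` satisfying
`|e*_{(n,k)}(f)| ≤ 2·(8/7)·‖f‖`, and the seminorm
`β(f)² = ∑_{n,k} 2^{-4π^{-1}(n+1,k)}|e*_{(n,k)}(f) − 2e*_{(n+1,k)}(f)|²`,
every `f` in the closed span of `{f_{d+1}, f_{d+2}, …}` satisfies `β(f) ≤ 2·2^{-2d}‖f‖`;
in particular `β(f) ≤ 2‖f‖` for every `f`. -/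
theorem stmt17 {Y : Type*} [NormedAddCommGroup Y] [NormedSpace ℝ Y] [CompleteSpace Y]
    (ι : ℕ ≃ ℕ × ℕ)
    (hι : ∀ p : ℕ × ℕ, ι.symm p < ι.symm (p.1 + 1, p.2))
    (fv : ℕ → Y) (estar : ℕ × ℕ → Y →L[ℝ] ℝ)
    (hbiorth : ∀ (i : ℕ) (p : ℕ × ℕ), estar p (fv i) = if p = ι i then (1 : ℝ) else 0)
    (hbd : ∀ (p : ℕ × ℕ) (y : Y), |estar p y| ≤ 2 * (8 / 7) * ‖y‖)
    (β : Y → ℝ)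
    (hβ : ∀ y : Y, β y = Real.sqrt (∑' p : ℕ × ℕ,
      ((2 : ℝ) ^ (4 * (ι.symm (p.1 + 1, p.2) + 1)))⁻¹
        * (estar p y - 2 * estar (p.1 + 1, p.2) y) ^ 2)) :
    (∀ d : ℕ, ∀ y ∈ closure ((Submodule.span ℝ (fv '' {i | d ≤ i}) : Submodule ℝ Y) : Set Y),
      β y ≤ 2 * ((2 : ℝ) ^ (2 * d))⁻¹ * ‖y‖)
    ∧ ∀ y : Y, β y ≤ 2 * ‖y‖ :=
  stmt17_general ι hι fv estar hbiorth hbd β hβ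
end
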